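/- arXiv:2501.16858 — 7 statements merged into one kernel-verified Lean document; each statement's English description precedes it below -/
import Mathlib

section
/- Suppose additionally that T is ergodic with respect to μ and that p = μ(A) > 0. Then the second moment identity ∫_A R² dμ = 1 + 2 ∫_Ω τ dμ holds as an identity in [0,∞]; equivalently, the second moment of R under the conditional probability measure μ(· | A) equals (1 + 2 E_μ[τ])/p. -/
open MeasureTheory ProbabilityTheory Set
open scoped ENNReal

/-- The first return time `R(f) = inf {z ≥ 1 : f z = true} ∈ ℕ ∪ {∞}`. -/
noncomputable def firstReturn (f : ℤ → Bool) : ℕ∞ :=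
  sInf ((fun n : ℕ => (n : ℕ∞)) '' {n : ℕ | 1 ≤ n ∧ f (n : ℤ) = true})

/-- The first hitting time `τ(f) = inf {z ≥ 0 : f z = true} ∈ ℕ ∪ {∞}`. -/
noncomputable def hittingTime (f : ℤ → Bool) : ℕ∞ :=
  sInf ((fun n : ℕ => (n : ℕ∞)) '' {n : ℕ | f (n : ℤ) = true})

/-! Write `A = {f 0 = true}` and `T` for the shift. Then `τ = 0` on `A`, `τ = R` off `A`, and
`R = τ ∘ T + 1`; hence `{R > n} \ A = {τ > n}` and `{R > n} = T⁻¹' {τ ≥ n}`, so invariance gives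
Kac's identity `μ (A ∩ {R > n}) = μ {τ ≥ n} - μ {τ > n} = μ {τ = n}`. Expanding
`R² = ∑_{n < R} (2n + 1)` yields `∫_A R² = ∑ₙ (2n + 1) μ {τ = n} = ∫ (2τ + 1)`, the last step
because `τ < ∞` a.e.: the set `{τ < ∞}` contains `A` and its preimage under `T`, so ergodicity
forces it to have full measure. -/

lemma sInf_image_natCast_eq_natCast_iff {S : Set ℕ} {n : ℕ} :
    sInf ((fun k : ℕ => (k : ℕ∞)) '' S) = n ↔ IsLeast S n := by
  rcases S.eq_empty_or_nonempty with rfl | hS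
  · simp [IsLeast]
  · rw [sInf_image, ← ENat.natCast_sInf hS, Nat.cast_inj]
    exact ⟨fun h => h ▸ isLeast_csInf hS, IsLeast.csInf_eq⟩

lemma ENat.toENNReal_sq_eq_tsum (x : ℕ∞) :
    (x : ℝ≥0∞) ^ 2 = ∑' n : ℕ, if (n : ℕ∞) < x then 2 * (n : ℝ≥0∞) + 1 else 0 := by
  induction x using ENat.recTopCoe with
  | top =>
    refine (top_unique ?_).symm
    calc (⊤ : ℝ≥0∞) = ∑' _ : ℕ, (1 : ℝ≥0∞) :=
          (ENNReal.tsum_const_eq_top_of_ne_zero one_ne_zero).symm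
      _ ≤ _ := ENNReal.tsum_le_tsum fun n => by simp
  | coe k =>
    rw [tsum_eq_sum (s := Finset.range k) fun n hn => by simp_all,
      Finset.sum_congr rfl fun n hn => if_pos (by simpa using hn), ENat.toENNReal_coe]
    induction k with
    | zero => simp
    | succ k ih => rw [Finset.sum_range_succ, ← ih]; push_cast; ring

section LayerCake

variable {α : Type*} [MeasurableSpace α] {μ : Measure α} {X : α → ℕ∞}

lemma lintegral_toENNReal_sq_eq_tsum (hX : Measurable X) :
    ∫⁻ a, (X a : ℝ≥0∞) ^ 2 ∂μ = ∑' n : ℕ, (2 * n + 1) * μ {a | (n : ℕ∞) < X a} := by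
  have hmeas (n : ℕ) : MeasurableSet {a | (n : ℕ∞) < X a} :=
    hX (MeasurableSet.of_discrete (s := {x | (n : ℕ∞) < x}))
  simp_rw [← lintegral_indicator_const (hmeas _)]
  rw [← lintegral_tsum fun n => (measurable_const.indicator (hmeas n)).aemeasurable]
  simp only [ENat.toENNReal_sq_eq_tsum, indicator_apply, mem_ofPred_eq]

lemma lintegral_comp_eq_tsum_of_ae_ne_top (hX : Measurable X) (hX_fin : ∀ᵐ a ∂μ, X a ≠ ⊤)
    (φ : ℕ∞ → ℝ≥0∞) : ∫⁻ a, φ (X a) ∂μ = ∑' n : ℕ, φ n * μ {a | X a = n} := by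
  have hmeas (n : ℕ) : MeasurableSet {a | X a = n} :=
    hX (MeasurableSet.of_discrete (s := {(n : ℕ∞)}))
  simp_rw [← lintegral_indicator_const (hmeas _)]
  rw [← lintegral_tsum fun n => (measurable_const.indicator (hmeas n)).aemeasurable]
  refine lintegral_congr_ae (hX_fin.mono fun a ha => ?_)
  lift X a to ℕ using ha with k hk
  simp [indicator_apply, ← hk]

end LayerCake

lemma Ergodic.ae_mem_of_preimage_subset {α : Type*} [MeasurableSpace α] {μ : Measure α}
    [IsFiniteMeasure μ] {T : α → α} {s : Set α} (hT : Ergodic T μ) (hs : NullMeasurableSet s μ)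
    (hTs : T ⁻¹' s ⊆ s) (hμs : μ s ≠ 0) : ∀ᵐ x ∂μ, x ∈ s := by
  rcases hT.ae_empty_or_univ_of_preimage_ae_le hs hTs.eventuallyLE with h | h
  · exact absurd (measure_congr h) (by simpa using hμs)
  · exact ae_eq_univ.1 h

lemma hittingTime_eq_natCast_iff (f : ℤ → Bool) (n : ℕ) :
    hittingTime f = n ↔ f n = true ∧ ∀ m < n, f m = false := by
  rw [hittingTime, sInf_image_natCast_eq_natCast_iff, IsLeast, lowerBounds]
  refine and_congr_right fun _ => ?_
  refine forall_congr' fun m => show (f m = true → n ≤ m) ↔ _ from ?_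
  cases f m <;> simp

lemma hittingTime_eq_ite (f : ℤ → Bool) :
    hittingTime f = if f 0 then 0 else firstReturn f := by
  cases h0 : f 0
  · rw [if_neg Bool.false_ne_true, hittingTime, firstReturn]
    congr with n
    rcases n.eq_zero_or_pos with rfl | hn
    · simpa using h0
    · simp [Nat.one_le_iff_ne_zero.2 hn.ne']
  · simpa using (hittingTime_eq_natCast_iff f 0).2 (by simpa using h0)

lemma hittingTime_le_firstReturn (f : ℤ → Bool) : hittingTime f ≤ firstReturn f := by
  rw [hittingTime_eq_ite]
  split_ifs <;> simp

lemma firstReturn_eq_hittingTime_add_one (f : ℤ → Bool) :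
    firstReturn f = hittingTime (fun z => f (z + 1)) + 1 := by
  have hS : {n : ℕ | 1 ≤ n ∧ f n = true} = (· + 1) '' {n : ℕ | f (n + 1) = true} := by
    ext n
    constructor
    · rintro ⟨hn, hf⟩
      exact ⟨n - 1, by simpa [Nat.cast_sub hn] using hf, by simp only; omega⟩
    · rintro ⟨k, hk, rfl⟩
      exact ⟨by simp, by simpa using hk⟩
  rw [firstReturn, hittingTime, hS, image_image, ENat.sInf_add, sInf_image, iInf_image]
  simp

lemma measurable_hittingTime : Measurable hittingTime := by
  refine ENat.measurable_iff.2 fun n => ?_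
  simp_rw [preimage, mem_singleton_iff, hittingTime_eq_natCast_iff]
  measurability

lemma measurable_firstReturn : Measurable firstReturn := by
  simp_rw [funext firstReturn_eq_hittingTime_add_one]
  exact (Measurable.of_discrete (f := fun x : ℕ∞ => x + 1)).comp (measurable_hittingTime.comp
    (by fun_prop : Measurable fun (f : ℤ → Bool) (z : ℤ) => f (z + 1)))

section Shift

variable {μ : Measure (ℤ → Bool)}

lemma measure_inter_natCast_lt_firstReturn [IsFiniteMeasure μ]
    (hμ : MeasurePreserving (fun (f : ℤ → Bool) z => f (z + 1)) μ μ) (n : ℕ) :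
    μ ({f | f 0 = true} ∩ {f | (n : ℕ∞) < firstReturn f}) = μ {f | hittingTime f = n} := by
  have hlt : MeasurableSet {f | (n : ℕ∞) < hittingTime f} :=
    measurable_hittingTime (MeasurableSet.of_discrete (s := {x | (n : ℕ∞) < x}))
  have hle : MeasurableSet {f | (n : ℕ∞) ≤ hittingTime f} :=
    measurable_hittingTime (MeasurableSet.of_discrete (s := {x | (n : ℕ∞) ≤ x}))
  have hlt_R : {f | (n : ℕ∞) < hittingTime f} ⊆ {f | (n : ℕ∞) < firstReturn f} :=
    fun f hf => hf.trans_le (hittingTime_le_firstReturn f)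
  have hlt_le : {f | (n : ℕ∞) < hittingTime f} ⊆ {f | (n : ℕ∞) ≤ hittingTime f} :=
    fun _ hf => le_of_lt (α := ℕ∞) hf
  have hA : {f | f 0 = true} ∩ {f | (n : ℕ∞) < firstReturn f} =
      {f | (n : ℕ∞) < firstReturn f} \ {f | (n : ℕ∞) < hittingTime f} := by
    ext f
    simp only [mem_inter_iff, mem_sdiff, mem_ofPred_eq, hittingTime_eq_ite]
    cases f 0 <;> simp
  have hR : {f | (n : ℕ∞) < firstReturn f} =
      (fun f z => f (z + 1)) ⁻¹' {f | (n : ℕ∞) ≤ hittingTime f} := by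
    ext f
    simp [firstReturn_eq_hittingTime_add_one, ENat.lt_add_one_iff']
  have hτ : {f | hittingTime f = n} =
      {f | (n : ℕ∞) ≤ hittingTime f} \ {f | (n : ℕ∞) < hittingTime f} := by
    ext f
    simp [le_antisymm_iff, and_comm]
  calc μ ({f | f 0 = true} ∩ {f | (n : ℕ∞) < firstReturn f})
      = μ {f | (n : ℕ∞) < firstReturn f} - μ {f | (n : ℕ∞) < hittingTime f} := by
        rw [hA, measure_sdiff hlt_R hlt.nullMeasurableSet (measure_ne_top _ _)]
    _ = μ {f | (n : ℕ∞) ≤ hittingTime f} - μ {f | (n : ℕ∞) < hittingTime f} := by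
        rw [hR, hμ.measure_preimage hle.nullMeasurableSet]
    _ = μ {f | hittingTime f = n} := by
        rw [hτ, measure_sdiff hlt_le hlt.nullMeasurableSet (measure_ne_top _ _)]

lemma ae_hittingTime_ne_top [IsFiniteMeasure μ]
    (hμ : Ergodic (fun (f : ℤ → Bool) z => f (z + 1)) μ) (hA : μ {f | f 0 = true} ≠ 0) :
    ∀ᵐ f ∂μ, hittingTime f ≠ ⊤ := by
  refine hμ.ae_mem_of_preimage_subset (s := {f | hittingTime f ≠ ⊤})
    (measurable_hittingTime (MeasurableSet.of_discrete (s := {⊤}ᶜ))).nullMeasurableSet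
    (fun f hf => ?_) (fun h => hA (measure_mono_null (fun f hf => ?_) h))
  · have hfin : firstReturn f ≠ ⊤ := by
      simpa [firstReturn_eq_hittingTime_add_one] using hf
    exact ne_top_of_le_ne_top hfin (hittingTime_le_firstReturn f)
  · simp [hittingTime_eq_ite, show f 0 = true from hf]

end Shift

theorem kac_second_moment_general
    (μ : Measure (ℤ → Bool)) [IsProbabilityMeasure μ]
    (T : (ℤ → Bool) → (ℤ → Bool)) (hT : ∀ f z, T f z = f (z + 1))
    (herg : Ergodic T μ)
    (A : Set (ℤ → Bool)) (hA : A = {f | f 0 = true})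
    (hp : 0 < μ A) :
    (∫⁻ f in A, (firstReturn f : ℝ≥0∞) ^ 2 ∂μ
        = 1 + 2 * ∫⁻ f, (hittingTime f : ℝ≥0∞) ∂μ) ∧
    (∫⁻ f, (firstReturn f : ℝ≥0∞) ^ 2 ∂(ProbabilityTheory.cond μ A)
        = (1 + 2 * ∫⁻ f, (hittingTime f : ℝ≥0∞) ∂μ) / μ A) := by
  subst hA
  obtain rfl : T = fun f z => f (z + 1) := funext fun f => funext (hT f)
  have hA_meas : MeasurableSet {f : ℤ → Bool | f 0 = true} :=
    (measurableSet_singleton true).preimage (measurable_pi_apply 0)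
  have key : ∫⁻ f in {f | f 0 = true}, (firstReturn f : ℝ≥0∞) ^ 2 ∂μ
      = 1 + 2 * ∫⁻ f, (hittingTime f : ℝ≥0∞) ∂μ :=
    calc _ = ∑' n : ℕ, (2 * n + 1) *
            μ ({f | f 0 = true} ∩ {f | (n : ℕ∞) < firstReturn f}) := by
          simp_rw [lintegral_toENNReal_sq_eq_tsum measurable_firstReturn,
            Measure.restrict_apply' hA_meas, inter_comm]
      _ = ∑' n : ℕ, (2 * n + 1) * μ {f | hittingTime f = n} := by
          simp_rw [measure_inter_natCast_lt_firstReturn herg.toMeasurePreserving]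
      _ = ∫⁻ f, 2 * (hittingTime f : ℝ≥0∞) + 1 ∂μ := by
          rw [lintegral_comp_eq_tsum_of_ae_ne_top measurable_hittingTime
            (ae_hittingTime_ne_top herg hp.ne') fun x => 2 * (x : ℝ≥0∞) + 1]
          simp
      _ = 1 + 2 * ∫⁻ f, (hittingTime f : ℝ≥0∞) ∂μ := by
          rw [lintegral_add_right _ measurable_const, lintegral_const_mul' _ _ (by norm_num),
            lintegral_const, measure_univ, mul_one, add_comm]
  refine ⟨key, ?_⟩
  rw [ProbabilityTheory.cond, lintegral_smul_measure, key, ENNReal.div_eq_inv_mul, smul_eq_mul]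

/-- Second-moment identity for the return time: `∫_A R² dμ = 1 + 2 ∫ τ dμ`;
equivalently, the second moment of `R` under `μ(·|A)` equals `(1 + 2 E_μ[τ])/μ(A)`. -/
theorem kac_second_moment
    (μ : Measure (ℤ → Bool)) [IsProbabilityMeasure μ]
    (T : (ℤ → Bool) → (ℤ → Bool)) (hT : ∀ f z, T f z = f (z + 1))
    (hinv : MeasurePreserving T μ μ) (herg : Ergodic T μ)
    (A : Set (ℤ → Bool)) (hA : A = {f | f 0 = true})
    (hp : 0 < μ A) :
    (∫⁻ f in A, (firstReturn f : ℝ≥0∞) ^ 2 ∂μ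
        = 1 + 2 * ∫⁻ f, (hittingTime f : ℝ≥0∞) ∂μ) ∧
    (∫⁻ f, (firstReturn f : ℝ≥0∞) ^ 2 ∂(ProbabilityTheory.cond μ A)
        = (1 + 2 * ∫⁻ f, (hittingTime f : ℝ≥0∞) ∂μ) / μ A) :=
  kac_second_moment_general μ T hT herg A hA hp
end

section
/- Let μ be a probability measure on Ω that is invariant and ergodic under the shift T, with finite expected root degree Δ = ∫_Ω deg(0) dμ < ∞ and with p = μ(A) > 0, where A = {E ∈ Ω : 0 is a cut point of E}. For E ∈ A let z₁(E) = inf{z ≥ 1 : z is a cut point of E} and let N(E) = #{(x, y) : 0 ≤ x < y ≤ z₁(E) − 1, E x y = true} denote the number of edges of the subgraph induced by the first block C₁ = {0, …, z₁(E) − 1}. Then ∫_A N dμ ≤ Δ/2; in particular the expectation of N under the conditional measure μ(· | A) is at most Δ/(2p), and hence finite. -/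
open MeasureTheory ProbabilityTheory Set
open scoped ENNReal

/-- Symmetric, irreflexive edge configurations on `ℤ`: the canonical space of graphs on `ℤ`. -/
def GraphCfg : Type :=
  {E : ℤ → ℤ → Bool // (∀ x y, E x y = E y x) ∧ ∀ x, E x x = false}

instance : MeasurableSpace GraphCfg :=
  inferInstanceAs (MeasurableSpace {E : ℤ → ℤ → Bool // (∀ x y, E x y = E y x) ∧ ∀ x, E x x = false})

/-- The shift `(T E) x y = E (x+1) (y+1)`. -/
def graphShift (E : GraphCfg) : GraphCfg :=
  ⟨fun x y => E.1 (x + 1) (y + 1),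
    fun x y => E.2.1 (x + 1) (y + 1),
    fun x => E.2.2 (x + 1)⟩

/-- The degree of a vertex `z`, an element of `ℕ ∪ {∞}`. -/
noncomputable def deg (z : ℤ) (E : GraphCfg) : ℕ∞ :=
  {y : ℤ | E.1 z y = true}.encard

/-- `z` is a cut point of `E`: the edge `{z-1, z}` is present and it is the only edge
`{x, y}` with `x ≤ z-1 ≤ z ≤ y`. -/
def IsCutPt (z : ℤ) (E : GraphCfg) : Prop :=
  E.1 (z - 1) z = true ∧
    ∀ x y : ℤ, x ≤ z - 1 → z ≤ y → (x, y) ≠ (z - 1, z) → E.1 x y = false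

/-- The next cut point `z₁(E) = inf {z ≥ 1 : z is a cut point} ∈ ℕ ∪ {∞}`. -/
noncomputable def nextCut (E : GraphCfg) : ℕ∞ :=
  sInf ((fun n : ℕ => (n : ℕ∞)) '' {n : ℕ | 1 ≤ n ∧ IsCutPt (n : ℤ) E})

/-- The number of edges of the subgraph induced by the first block
`C₁ = {0, …, z₁(E) − 1}`: pairs `0 ≤ x < y ≤ z₁(E) − 1` (i.e. `y < z₁(E)`) carrying
an edge. -/
noncomputable def blockEdges (E : GraphCfg) : ℕ∞ :=
  {p : ℤ × ℤ | 0 ≤ p.1 ∧ p.1 < p.2 ∧ (p.2.toNat : ℕ∞) < nextCut E ∧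
    E.1 p.1 p.2 = true}.encard

/-!
Every edge of the first block `{0, …, z₁ - 1}` is counted twice in the degree sum over the
block, so on `A` we have `2 N ≤ ∑_{k < z₁} deg k`. Shifting by `k`, the event
"`0` is a cut point and `k < z₁`" becomes "`-k` is the last cut point at or before `0`", and
`deg k` becomes `deg 0`. These events are disjoint in `k`, so shift invariance gives
`∫_A 2 N ≤ ∫ deg 0`. The conditional bounds follow by dividing by `μ A`.
-/

theorem two_mul_encard_edges_le_encard_darts {α : Type*} [LinearOrder α] {r : α → α → Prop}
    (hr : ∀ x y, r x y → r y x) (s : Set α) :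
    2 * {p : α × α | p.1 ∈ s ∧ p.2 ∈ s ∧ p.1 < p.2 ∧ r p.1 p.2}.encard ≤
      {p : α × α | p.1 ∈ s ∧ r p.1 p.2}.encard := by
  set S := {p : α × α | p.1 ∈ s ∧ p.2 ∈ s ∧ p.1 < p.2 ∧ r p.1 p.2}
  have hdisj : Disjoint S (Prod.swap '' S) := by
    rw [Set.disjoint_left]
    rintro p hp ⟨q, hq, rfl⟩
    exact lt_asymm hp.2.2.1 hq.2.2.1
  calc 2 * S.encard = (S ∪ Prod.swap '' S).encard := by
        rw [Set.encard_union_eq hdisj, Prod.swap_injective.encard_image, two_mul]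
    _ ≤ _ := by
        refine Set.encard_le_encard (Set.union_subset (fun p hp => ⟨hp.1, hp.2.2.2⟩) ?_)
        rintro _ ⟨p, hp, rfl⟩
        exact ⟨hp.2.1, hr _ _ hp.2.2.2⟩

theorem encard_setOf_fst_mem_eq_tsum_indicator {α β : Type*} (s : Set α) (r : α → β → Prop) :
    ({p : α × β | p.1 ∈ s ∧ r p.1 p.2}.encard : ℝ≥0∞) =
      ∑' x, s.indicator (fun x => ({y | r x y}.encard : ℝ≥0∞)) x := by
  rw [← ENNReal.tsum_set_one, tsum_subtype _ fun _ => 1, ENNReal.tsum_prod']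
  refine tsum_congr fun x => ?_
  by_cases hx : x ∈ s
  · rw [indicator_of_mem hx, ← ENNReal.tsum_set_one, tsum_subtype _ fun _ => 1]
    exact tsum_congr fun y => by by_cases h : r x y <;> simp [h, hx]
  · simp [hx]

theorem MeasureTheory.MeasurePreserving.lintegral_tsum_indicator_comp_iterate_le
    {α : Type*} [MeasurableSpace α] {μ : Measure α} {f : α → α}
    (hf : MeasurePreserving f μ μ) {g : α → ℝ≥0∞} (hg : Measurable g) {D : ℕ → Set α}
    (hD : ∀ k, MeasurableSet (D k)) (hdisj : Pairwise (Function.onFun Disjoint D)) :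
    ∫⁻ x, ∑' k, (D k).indicator g (f^[k] x) ∂μ ≤ ∫⁻ x, g x ∂μ := by
  have hgD : ∀ k, Measurable ((D k).indicator g) := fun k => hg.indicator (hD k)
  calc ∫⁻ x, ∑' k, (D k).indicator g (f^[k] x) ∂μ
      = ∑' k, ∫⁻ x, (D k).indicator g x ∂μ := by
        refine (lintegral_tsum fun k => ?_).trans (tsum_congr fun k => ?_)
        · exact ((hgD k).comp (hf.measurable.iterate k)).aemeasurable
        · exact (hf.iterate k).lintegral_comp (hgD k)
    _ = ∫⁻ x in ⋃ k, D k, g x ∂μ := by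
        simp_rw [lintegral_indicator (hD _)]
        exact (lintegral_iUnion hD hdisj g).symm
    _ ≤ ∫⁻ x, g x ∂μ := setLIntegral_le_lintegral _ _

theorem graphShift_iterate_apply (k : ℕ) (E : GraphCfg) (x y : ℤ) :
    (graphShift^[k] E).1 x y = E.1 (x + k) (y + k) := by
  induction k generalizing E with
  | zero => simp
  | succ n ih =>
    rw [Function.iterate_succ_apply, ih]
    simp only [graphShift, Nat.cast_succ, add_assoc]

theorem isCutPt_graphShift_iterate (k : ℕ) (z : ℤ) (E : GraphCfg) :
    IsCutPt z (graphShift^[k] E) ↔ IsCutPt (z + k) E := by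
  simp only [IsCutPt, graphShift_iterate_apply, ne_eq, Prod.mk.injEq]
  refine and_congr (by rw [sub_add_eq_add_sub])
    ⟨fun h x y hx hy hne => ?_, fun h x y hx hy hne => ?_⟩
  · simpa using h (x - k) (y - k) (by omega) (by omega) (by omega)
  · exact h (x + k) (y + k) (by omega) (by omega) (by omega)

theorem deg_graphShift_iterate (k : ℕ) (z : ℤ) (E : GraphCfg) :
    deg z (graphShift^[k] E) = deg (z + k) E := by
  rw [deg, deg, ← (add_left_injective (k : ℤ)).encard_image]
  congr 1
  ext y
  simp only [mem_image, mem_ofPred_eq, graphShift_iterate_apply]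
  exact ⟨fun ⟨w, hw, hwy⟩ => hwy ▸ hw, fun h => ⟨y - k, by simpa using h, by ring⟩⟩

theorem natCast_lt_nextCut_iff (k : ℕ) (E : GraphCfg) :
    (k : ℕ∞) < nextCut E ↔ ∀ n : ℕ, 1 ≤ n → n ≤ k → ¬ IsCutPt n E := by
  rw [← ENat.natCast_add_one_le_iff, nextCut, le_sInf_iff, forall_mem_image]
  refine forall_congr' fun n => ⟨fun h hn hnk hcut => ?_, fun h ⟨hn, hcut⟩ => ?_⟩
  · have := h ⟨hn, hcut⟩
    norm_cast at this
    omega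
  · by_contra hlt
    exact h hn (by norm_cast at hlt; omega) hcut

def lastCutAt (k : ℕ) : Set GraphCfg :=
  {E | IsCutPt (-k) E ∧ ∀ n : ℕ, 1 ≤ n → n ≤ k → ¬ IsCutPt (n - k) E}

theorem graphShift_iterate_mem_lastCutAt (k : ℕ) (E : GraphCfg) :
    graphShift^[k] E ∈ lastCutAt k ↔ IsCutPt 0 E ∧ (k : ℕ∞) < nextCut E := by
  simp only [lastCutAt, mem_ofPred_eq, isCutPt_graphShift_iterate, neg_add_cancel,
    sub_add_cancel, natCast_lt_nextCut_iff]

theorem pairwise_disjoint_lastCutAt : Pairwise (Function.onFun Disjoint lastCutAt) := by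
  refine (pairwise_disjoint_on _).2 fun i j hij => disjoint_left.2 fun E hi hj => ?_
  have hcut := hj.2 (j - i) (by omega) (by omega)
  rw [Nat.cast_sub hij.le, sub_sub_cancel_left] at hcut
  exact hcut hi.1

@[fun_prop]
theorem measurable_edge (x y : ℤ) : Measurable fun E : GraphCfg => E.1 x y :=
  (measurable_pi_apply y).comp ((measurable_pi_apply x).comp measurable_subtype_coe)

theorem measurableSet_edge_eq (x y : ℤ) (b : Bool) :
    MeasurableSet {E : GraphCfg | E.1 x y = b} :=
  measurable_edge x y (measurableSet_singleton b)

@[fun_prop]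
theorem measurable_isCutPt (z : ℤ) : Measurable (IsCutPt z) := by
  have hedge : ∀ x y (b : Bool), Measurable fun E : GraphCfg => E.1 x y = b :=
    fun x y b => measurableSet_setOfPred.1 (measurableSet_edge_eq x y b)
  unfold IsCutPt
  fun_prop

theorem measurableSet_lastCutAt (k : ℕ) : MeasurableSet (lastCutAt k) :=
  measurableSet_setOfPred.2 (by fun_prop)

theorem measurable_deg (z : ℤ) : Measurable fun E => (deg z E : ℝ≥0∞) := by
  simp_rw [deg, ← ENNReal.tsum_set_one, tsum_subtype _ fun _ => (1 : ℝ≥0∞), indicator_apply,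
    mem_ofPred_eq]
  exact Measurable.tsum fun y =>
    Measurable.ite (measurableSet_edge_eq z y true) measurable_const measurable_const

theorem two_mul_blockEdges_le (E : GraphCfg) :
    2 * (blockEdges E : ℝ≥0∞) ≤
      ∑' k : ℕ, if (k : ℕ∞) < nextCut E then (deg k E : ℝ≥0∞) else 0 := by
  set s : Set ℤ := {x | 0 ≤ x ∧ (x.toNat : ℕ∞) < nextCut E}
  have hblock : blockEdges E ≤ {p : ℤ × ℤ | p.1 ∈ s ∧ p.2 ∈ s ∧ p.1 < p.2 ∧ E.1 p.1 p.2}.encard :=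
    encard_le_encard fun p ⟨h0, hlt, hcut, he⟩ =>
      ⟨⟨h0, lt_of_le_of_lt (by exact_mod_cast Int.toNat_le_toNat hlt.le) hcut⟩,
        ⟨by omega, hcut⟩, hlt, he⟩
  have hsupp : (Function.support (s.indicator fun x => (deg x E : ℝ≥0∞))) ⊆ range Nat.cast :=
    fun x hx => ⟨x.toNat, Int.toNat_of_nonneg (support_indicator_subset hx).1⟩
  calc 2 * (blockEdges E : ℝ≥0∞)
      ≤ ({p : ℤ × ℤ | p.1 ∈ s ∧ E.1 p.1 p.2}.encard : ℝ≥0∞) := by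
        have := (mul_le_mul_right hblock 2).trans
          (two_mul_encard_edges_le_encard_darts (r := fun x y => E.1 x y = true)
            (fun x y h => by rwa [E.2.1]) s)
        exact_mod_cast this
    _ = ∑' x : ℤ, s.indicator (fun x => (deg x E : ℝ≥0∞)) x :=
        encard_setOf_fst_mem_eq_tsum_indicator s fun x y => E.1 x y = true
    _ = _ := by
        rw [← Nat.cast_injective.tsum_eq hsupp]
        exact tsum_congr fun k => by simp [s, indicator_apply]

theorem indicator_isCutPt_two_mul_blockEdges_le (E : GraphCfg) :
    {E | IsCutPt 0 E}.indicator (fun E => 2 * (blockEdges E : ℝ≥0∞)) E ≤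
      ∑' k, (lastCutAt k).indicator (fun E => (deg 0 E : ℝ≥0∞)) (graphShift^[k] E) := by
  by_cases h : E ∈ {E | IsCutPt 0 E}
  · rw [indicator_of_mem h]
    refine (two_mul_blockEdges_le E).trans_eq (tsum_congr fun k => ?_)
    by_cases hk : (k : ℕ∞) < nextCut E
    · rw [if_pos hk, indicator_of_mem ((graphShift_iterate_mem_lastCutAt k E).2 ⟨h, hk⟩),
        deg_graphShift_iterate, zero_add]
    · rw [if_neg hk, indicator_of_notMem fun hmem =>
        hk ((graphShift_iterate_mem_lastCutAt k E).1 hmem).2]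
  · rw [indicator_of_notMem h]
    exact zero_le

theorem block_edges_expectation_general
    (μ : Measure GraphCfg)
    (hinv : MeasurePreserving graphShift μ μ)
    (hΔ : ∫⁻ E, (deg 0 E : ℝ≥0∞) ∂μ ≠ ⊤)
    (A : Set GraphCfg) (hA : A = {E | IsCutPt 0 E}) :
    (∫⁻ E in A, (blockEdges E : ℝ≥0∞) ∂μ ≤ (∫⁻ E, (deg 0 E : ℝ≥0∞) ∂μ) / 2) ∧
    (∫⁻ E, (blockEdges E : ℝ≥0∞) ∂(ProbabilityTheory.cond μ A)
        ≤ (∫⁻ E, (deg 0 E : ℝ≥0∞) ∂μ) / (2 * μ A)) ∧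
    (∫⁻ E, (blockEdges E : ℝ≥0∞) ∂(ProbabilityTheory.cond μ A) ≠ ⊤) := by
  set Δ := ∫⁻ E, (deg 0 E : ℝ≥0∞) ∂μ
  have hAm : MeasurableSet A := hA ▸ measurableSet_setOfPred.2 (measurable_isCutPt 0)
  have h1 : ∫⁻ E in A, (blockEdges E : ℝ≥0∞) ∂μ ≤ Δ / 2 := by
    rw [ENNReal.le_div_iff_mul_le (by norm_num) (by norm_num), mul_comm,
      ← lintegral_const_mul' _ _ ENNReal.ofNat_ne_top, ← lintegral_indicator hAm, hA]
    exact (lintegral_mono indicator_isCutPt_two_mul_blockEdges_le).trans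
      (hinv.lintegral_tsum_indicator_comp_iterate_le (measurable_deg 0)
        measurableSet_lastCutAt pairwise_disjoint_lastCutAt)
  have h2 : ∫⁻ E, (blockEdges E : ℝ≥0∞) ∂(ProbabilityTheory.cond μ A) ≤ Δ / (2 * μ A) := by
    calc ∫⁻ E, (blockEdges E : ℝ≥0∞) ∂(ProbabilityTheory.cond μ A)
        = (μ A)⁻¹ * ∫⁻ E in A, (blockEdges E : ℝ≥0∞) ∂μ := by
          rw [ProbabilityTheory.cond, lintegral_smul_measure, smul_eq_mul]
      _ ≤ (μ A)⁻¹ * (Δ / 2) := by gcongr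
      _ = Δ / (2 * μ A) := by
          rw [div_eq_mul_inv, div_eq_mul_inv, ENNReal.mul_inv (by norm_num) (by norm_num)]
          ring
  refine ⟨h1, h2, ?_⟩
  rcases eq_or_ne (μ A) 0 with h0 | h0
  · simp [cond_eq_zero_of_meas_eq_zero h0]
  · exact (h2.trans_lt (ENNReal.div_lt_top hΔ (mul_ne_zero two_ne_zero h0))).ne

/-- The expected number of edges in the first block: `∫_A N dμ ≤ Δ/2`, so the mean of `N`
under `μ(·|A)` is at most `Δ/(2 μ(A))`, hence finite. -/
theorem block_edges_expectation
    (μ : Measure GraphCfg) [IsProbabilityMeasure μ]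
    (hinv : MeasurePreserving graphShift μ μ) (herg : Ergodic graphShift μ)
    (hΔ : ∫⁻ E, (deg 0 E : ℝ≥0∞) ∂μ ≠ ⊤)
    (A : Set GraphCfg) (hA : A = {E | IsCutPt 0 E})
    (hp : 0 < μ A) :
    (∫⁻ E in A, (blockEdges E : ℝ≥0∞) ∂μ ≤ (∫⁻ E, (deg 0 E : ℝ≥0∞) ∂μ) / 2) ∧
    (∫⁻ E, (blockEdges E : ℝ≥0∞) ∂(ProbabilityTheory.cond μ A)
        ≤ (∫⁻ E, (deg 0 E : ℝ≥0∞) ∂μ) / (2 * μ A)) ∧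
    (∫⁻ E, (blockEdges E : ℝ≥0∞) ∂(ProbabilityTheory.cond μ A) ≠ ⊤) :=
  block_edges_expectation_general μ hinv hΔ A hA
end

section
/- Let μ be a probability measure on Ω that is invariant and ergodic under the shift T, and suppose μ({E : deg(z)(E) < ∞ for every z ∈ ℤ}) = 1 (μ-almost sure local finiteness). Then the event that infinitely many edges lie above the link {−1, 0} has trivial probability: μ({E : e(0)(E) = ∞}) ∈ {0, 1}. -/
open MeasureTheory ProbabilityTheory Set
open scoped ENNReal

/-- The number of edges above the link `{z−1, z}`, an element of `ℕ ∪ {∞}`. -/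
noncomputable def edgesAbove (z : ℤ) (E : GraphCfg) : ℕ∞ :=
  {p : ℤ × ℤ | p.1 ≤ z - 1 ∧ z ≤ p.2 ∧ E.1 p.1 p.2 = true}.encard

/-!
The edges above `{-1, 0}` and those above `{0, 1}` differ only by edges at vertex `0`, so by
local finiteness the two counts are simultaneously infinite. The edges above `{0, 1}` are
the edges above `{-1, 0}` of the shifted graph, hence `{E | edgesAbove 0 E = ⊤}` is invariant
modulo `μ`, and ergodicity makes its probability `0` or `1`.
-/

theorem measurableSet_setOf_infinite {α ι : Type*} [MeasurableSpace α] [Countable ι]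
    {p : ι → α → Prop} (hp : ∀ i, MeasurableSet {x | p i x}) :
    MeasurableSet {x | {i | p i x}.Infinite} := by
  have h : {x | {i | p i x}.Infinite} = ⋂ F : Finset ι, ⋃ i ∈ (↑F : Set ι)ᶜ, {x | p i x} := by
    ext x
    simp only [mem_ofPred_eq, mem_iInter, mem_iUnion, mem_compl_iff, Finset.mem_coe, exists_prop]
    refine ⟨fun hinf F => ?_, fun h hfin => ?_⟩
    · obtain ⟨i, hi, hiF⟩ := hinf.exists_notMem_finset F
      exact ⟨i, hiF, hi⟩
    · obtain ⟨i, hiF, hi⟩ := h hfin.toFinset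
      exact hiF (hfin.mem_toFinset.2 hi)
  rw [h]
  exact .iInter fun F => .biUnion (to_countable _) fun i _ => hp i

theorem measurableSet_graphCfg_adj (x y : ℤ) : MeasurableSet {E : GraphCfg | E.1 x y = true} :=
  have h : Measurable fun E : GraphCfg => E.1 x y :=
    (measurable_pi_apply y).comp ((measurable_pi_apply x).comp measurable_subtype_coe)
  h (measurableSet_singleton true)

def edgeSetAbove (z : ℤ) (E : GraphCfg) : Set (ℤ × ℤ) :=
  {p | p.1 ≤ z - 1 ∧ z ≤ p.2 ∧ E.1 p.1 p.2 = true}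

def neighborSet (z : ℤ) (E : GraphCfg) : Set ℤ :=
  {y | E.1 z y = true}

theorem encard_edgeSetAbove (z : ℤ) (E : GraphCfg) :
    (edgeSetAbove z E).encard = edgesAbove z E :=
  rfl

theorem encard_neighborSet (z : ℤ) (E : GraphCfg) : (neighborSet z E).encard = deg z E :=
  rfl

theorem measurableSet_edgesAbove_eq_top (z : ℤ) :
    MeasurableSet {E : GraphCfg | edgesAbove z E = ⊤} := by
  simp only [← encard_edgeSetAbove, encard_eq_top_iff, edgeSetAbove]
  refine measurableSet_setOf_infinite fun p => ?_
  simp only [ofPred_and]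
  exact (MeasurableSet.const _).inter ((MeasurableSet.const _).inter
    (measurableSet_graphCfg_adj p.1 p.2))

theorem edgeSetAbove_graphShift (z : ℤ) (E : GraphCfg) :
    edgeSetAbove z (graphShift E) = Equiv.addRight (1, 1) ⁻¹' edgeSetAbove (z + 1) E := by
  ext ⟨a, b⟩
  simp only [edgeSetAbove, graphShift, mem_ofPred_eq, mem_preimage, Equiv.coe_addRight,
    Prod.mk_add_mk]
  constructor <;> rintro ⟨h₁, h₂, h₃⟩ <;> exact ⟨by omega, by omega, h₃⟩

theorem edgesAbove_graphShift (z : ℤ) (E : GraphCfg) :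
    edgesAbove z (graphShift E) = edgesAbove (z + 1) E := by
  rw [← encard_edgeSetAbove, edgeSetAbove_graphShift,
    encard_preimage_of_bijective (Equiv.bijective _), encard_edgeSetAbove]

theorem edgesAbove_succ_le (z : ℤ) (E : GraphCfg) :
    edgesAbove (z + 1) E ≤ edgesAbove z E + deg z E := by
  have hsub : edgeSetAbove (z + 1) E ⊆ edgeSetAbove z E ∪ Prod.mk z '' neighborSet z E := by
    rintro ⟨a, b⟩ ⟨h₁, h₂, h₃⟩
    by_cases ha : a ≤ z - 1
    · exact .inl ⟨ha, by omega, h₃⟩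
    · obtain rfl : a = z := by omega
      exact .inr ⟨b, h₃, rfl⟩
  calc edgesAbove (z + 1) E
      ≤ (edgeSetAbove z E ∪ Prod.mk z '' neighborSet z E).encard := encard_le_encard hsub
    _ ≤ edgesAbove z E + (Prod.mk z '' neighborSet z E).encard := encard_union_le _ _
    _ = edgesAbove z E + deg z E := by rw [(Prod.mk_right_injective z).encard_image, encard_neighborSet]

theorem edgesAbove_le_succ (z : ℤ) (E : GraphCfg) :
    edgesAbove z E ≤ edgesAbove (z + 1) E + deg z E := by
  have hsub : edgeSetAbove z E ⊆ edgeSetAbove (z + 1) E ∪ (·, z) '' neighborSet z E := by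
    rintro ⟨a, b⟩ ⟨h₁, h₂, h₃⟩
    by_cases hb : z + 1 ≤ b
    · exact .inl ⟨by omega, hb, h₃⟩
    · obtain rfl : b = z := by omega
      exact .inr ⟨a, (E.2.1 b a).trans h₃, rfl⟩
  calc edgesAbove z E
      ≤ (edgeSetAbove (z + 1) E ∪ (·, z) '' neighborSet z E).encard := encard_le_encard hsub
    _ ≤ edgesAbove (z + 1) E + ((·, z) '' neighborSet z E).encard := encard_union_le _ _
    _ = edgesAbove (z + 1) E + deg z E := by rw [(Prod.mk_left_injective z).encard_image, encard_neighborSet]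

theorem edgesAbove_succ_eq_top_iff {z : ℤ} {E : GraphCfg} (hz : deg z E ≠ ⊤) :
    edgesAbove (z + 1) E = ⊤ ↔ edgesAbove z E = ⊤ := by
  refine ⟨fun h => ?_, fun h => ?_⟩ <;> by_contra hne
  · exact WithTop.add_ne_top.2 ⟨hne, hz⟩ (top_le_iff.1 (h ▸ edgesAbove_succ_le z E))
  · exact WithTop.add_ne_top.2 ⟨hne, hz⟩ (top_le_iff.1 (h ▸ edgesAbove_le_succ z E))

theorem edgesAbove_zero_one_law_general
    (μ : Measure GraphCfg) [IsProbabilityMeasure μ]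
    (herg : Ergodic graphShift μ)
    (hloc : ∀ᵐ E ∂μ, ∀ z : ℤ, deg z E ≠ ⊤) :
    μ {E | edgesAbove 0 E = ⊤} = 0 ∨ μ {E | edgesAbove 0 E = ⊤} = 1 := by
  have hinv : graphShift ⁻¹' {E | edgesAbove 0 E = ⊤} =ᵐ[μ] {E | edgesAbove 0 E = ⊤} := by
    filter_upwards [hloc] with E hE
    refine propext (?_ : edgesAbove 0 (graphShift E) = ⊤ ↔ edgesAbove 0 E = ⊤)
    rw [edgesAbove_graphShift]
    exact edgesAbove_succ_eq_top_iff (hE 0)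
  rcases herg.quasiErgodic.ae_empty_or_univ₀ (measurableSet_edgesAbove_eq_top 0).nullMeasurableSet
    hinv with h | h
  · exact Or.inl (by rw [measure_congr h, measure_empty])
  · exact Or.inr (by rw [measure_congr h, measure_univ])

/-- Zero-one law: for an invariant, ergodic, a.s. locally finite random graph on `ℤ`,
the event that infinitely many edges lie above the link `{−1, 0}` has probability
`0` or `1`. -/
theorem edgesAbove_zero_one_law
    (μ : Measure GraphCfg) [IsProbabilityMeasure μ]
    (hinv : MeasurePreserving graphShift μ μ) (herg : Ergodic graphShift μ)
    (hloc : ∀ᵐ E ∂μ, ∀ z : ℤ, deg z E ≠ ⊤) :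
    μ {E | edgesAbove 0 E = ⊤} = 0 ∨ μ {E | edgesAbove 0 E = ⊤} = 1 :=
  edgesAbove_zero_one_law_general μ herg hloc
end

section
/- Suppose in addition that the family (χ_{x,y})_{(x,y)∈I} is independent, that Σ_{k≥1} k · φ(k) < ∞, and that φ(k) < 1 for every k ≥ 2. Then P(χ_{x,y} = 0 for every (x, y) ∈ I with x ≤ −1, y ≥ 0 and (x, y) ≠ (−1, 0)) > 0; that is, with positive probability the only possible edge above the link {−1, 0} is the nearest-neighbour edge {−1, 0} itself, so that 0 is a cut point of the long-range percolation graph with positive probability. -/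
open MeasureTheory ProbabilityTheory Set
open scoped ENNReal

/-!
The events `{χ i = false}` over the long edges above the link are independent, each has positive
probability, and their complements have summable probabilities, because exactly `k` edges of
length `k` lie above a link. Choose a finite set `F` of edges outside of which these complement
probabilities sum to less than `1`. By the union bound, with positive probability no edge outside
`F` is open; this event is independent of the event that no edge of `F` is open, which has
probability `∏_{i ∈ F} (1 - φ(|i|)) > 0`.
-/

/-- The index set `I = {(x, y) ∈ ℤ × ℤ : x < y}` of potential edges. -/
def EdgeIdx : Type := {p : ℤ × ℤ // p.1 < p.2}

namespace MeasureTheory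

variable {Ω ι : Type*} [MeasurableSpace Ω] {μ : Measure Ω}

theorem measure_iInter_pos_of_tsum_measure_compl_lt_one [IsProbabilityMeasure μ] [Countable ι]
    {s : ι → Set Ω} (h : ∑' i, μ (s i)ᶜ < 1) : 0 < μ (⋂ i, s i) := by
  refine pos_iff_ne_zero.2 fun h0 => h.not_ge ?_
  calc 1 = μ ((⋂ i, s i) ∪ (⋂ i, s i)ᶜ) := by rw [union_compl_self, measure_univ]
    _ ≤ μ (⋂ i, s i) + μ (⋂ i, s i)ᶜ := measure_union_le _ _
    _ = μ (⋃ i, (s i)ᶜ) := by rw [h0, zero_add, compl_iInter]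
    _ ≤ ∑' i, μ (s i)ᶜ := measure_iUnion_le _

end MeasureTheory

namespace ProbabilityTheory

variable {Ω ι : Type*} [MeasurableSpace Ω] {μ : Measure Ω}

theorem iIndepFun.iIndepSet_preimage {β : ι → Type*} [∀ i, MeasurableSpace (β i)]
    {f : ∀ i, Ω → β i} (hf : iIndepFun f μ) (hfm : ∀ i, Measurable (f i)) {t : ∀ i, Set (β i)}
    (ht : ∀ i, MeasurableSet (t i)) : iIndepSet (fun i => f i ⁻¹' t i) μ :=
  (iIndepSet_iff_meas_biInter fun i => hfm i (ht i)).2 fun S =>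
    hf.measure_inter_preimage_eq_mul S fun i _ => ht i

theorem iIndepSet.measure_iInter_pos [Countable ι] {s : ι → Set Ω}
    (hsm : ∀ i, MeasurableSet (s i)) (hs : iIndepSet s μ) (hpos : ∀ i, μ (s i) ≠ 0)
    (hsum : ∑' i, μ (s i)ᶜ ≠ ∞) : 0 < μ (⋂ i, s i) := by
  have := hs.isProbabilityMeasure
  obtain ⟨F, hF⟩ : ∃ F : Finset ι, ∑' i : {i // i ∉ F}, μ (s i)ᶜ < 1 :=
    ((ENNReal.tendsto_tsum_compl_atTop_zero hsum).eventually_lt_const one_pos).exists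
  have hsplit : ⋂ i, s i = (⋂ i ∈ F, s i) ∩ ⋂ i : {i // i ∉ F}, s i := by
    ext ω
    simp only [mem_iInter, mem_inter_iff, Subtype.forall]
    exact ⟨fun h => ⟨fun i _ => h i, fun i _ => h i⟩,
      fun h i => (em (i ∈ F)).elim (h.1 i) (h.2 i)⟩
  have hindep := hs.indep_generateFrom_of_disjoint hsm F {i | i ∉ F} disjoint_compl_right
  rw [hsplit, (Indep_iff _ _ _).1 hindep (⋂ i ∈ F, s i) (⋂ i : {i // i ∉ F}, s i)
    (F.measurableSet_biInter fun i hi => MeasurableSpace.measurableSet_generateFrom ⟨i, hi, rfl⟩)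
    (MeasurableSet.iInter fun i => MeasurableSpace.measurableSet_generateFrom ⟨i, i.2, rfl⟩),
    hs.meas_biInter]
  exact ENNReal.mul_pos (Finset.prod_ne_zero_iff.2 fun i _ => hpos i)
    (measure_iInter_pos_of_tsum_measure_compl_lt_one hF).ne'

end ProbabilityTheory

instance : Countable EdgeIdx := by unfold EdgeIdx; infer_instance

def EdgeIdx.length (i : EdgeIdx) : ℕ := (i.1.2 - i.1.1).toNat

def longEdgesOverLink : Set EdgeIdx := {i | i.1.1 ≤ -1 ∧ 0 ≤ i.1.2 ∧ i.1 ≠ (-1, 0)}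

theorem two_le_length_of_mem_longEdgesOverLink {i : EdgeIdx} (hi : i ∈ longEdgesOverLink) :
    2 ≤ i.length := by
  obtain ⟨hx, hy, hne⟩ := hi
  have : ¬(i.1.1 = -1 ∧ i.1.2 = 0) := fun h => hne (Prod.ext h.1 h.2)
  unfold EdgeIdx.length
  omega

/-- An edge `(x, y)` of length `k` over the link is determined by `-1 - x ∈ {0, …, k - 1}`. -/
theorem tsum_longEdgesOverLink_le (f : ℕ → ℝ≥0∞) :
    ∑' i : longEdgesOverLink, f i.1.length ≤ ∑' k, k * f k := by
  let g : longEdgesOverLink → Σ k : ℕ, Fin k := fun i =>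
    ⟨i.1.length, (-1 - i.1.1.1).toNat, by obtain ⟨hx, hy, -⟩ := i.2; unfold EdgeIdx.length; omega⟩
  have hg : Function.Injective g := by
    rintro ⟨⟨⟨x, y⟩, hxy⟩, hx, hy, _⟩ ⟨⟨⟨x', y'⟩, hxy'⟩, hx', hy', _⟩ hij
    obtain ⟨hlen, hpos⟩ := Sigma.ext_iff.1 hij
    rw [Fin.heq_ext_iff hlen] at hpos
    simp only [g, EdgeIdx.length] at hlen hpos hx hy hx' hy'
    have hx : x = x' := by omega
    have hy : y = y' := by omega
    subst hx hy
    rfl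
  calc ∑' i : longEdgesOverLink, f i.1.length = ∑' i, f (g i).1 := rfl
    _ ≤ ∑' p : Σ k : ℕ, Fin k, f p.1 := ENNReal.tsum_comp_le_tsum_of_injective hg _
    _ = ∑' k, k * f k := by simp [ENNReal.tsum_sigma']

theorem lrp_cut_point_positive_probability_general
    {Ω : Type*} [MeasurableSpace Ω] (P : Measure Ω) [IsProbabilityMeasure P]
    (φ : ℕ → ℝ)
    (χ : EdgeIdx → Ω → Bool)
    (hmeas : ∀ i, Measurable (χ i))
    (hber : ∀ i : EdgeIdx, P {ω | χ i ω = true} = ENNReal.ofReal (φ (i.1.2 - i.1.1).toNat))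
    (hind : iIndepFun χ P)
    (hsum : (∑' k : ℕ, (k : ℝ≥0∞) * ENNReal.ofReal (φ k)) ≠ ⊤)
    (hlt : ∀ k : ℕ, 2 ≤ k → φ k < 1) :
    0 < P {ω | ∀ i : EdgeIdx, i.1.1 ≤ -1 → 0 ≤ i.1.2 → i.1 ≠ (-1, 0) → χ i ω = false} := by
  set A : EdgeIdx → Set Ω := fun i => χ i ⁻¹' {false}
  have hAm : ∀ i, MeasurableSet (A i) := fun i => hmeas i (measurableSet_singleton false)
  have hAc : ∀ i, P (A i)ᶜ = ENNReal.ofReal (φ i.length) := fun i => by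
    rw [EdgeIdx.length, ← hber i]; congr 1; ext ω; simp [A]
  have hApos : ∀ i ∈ longEdgesOverLink, P (A i) ≠ 0 := fun i hi => by
    rw [← compl_compl (A i), prob_compl_eq_one_sub (hAm i).compl, hAc]
    exact (tsub_pos_of_lt <| ENNReal.ofReal_lt_one.2 <|
      hlt _ (two_le_length_of_mem_longEdgesOverLink hi)).ne'
  have hAsum : ∑' i : longEdgesOverLink, P (A i)ᶜ ≠ ∞ :=
    ne_top_of_le_ne_top hsum (by simpa only [hAc] using tsum_longEdgesOverLink_le _)
  have hAind : iIndepSet (fun i : longEdgesOverLink => A i) P :=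
    (hind.precomp Subtype.val_injective).iIndepSet_preimage (fun i => hmeas i)
      fun _ => measurableSet_singleton false
  convert hAind.measure_iInter_pos (fun i : longEdgesOverLink => hAm i) (fun i => hApos i i.2)
    hAsum using 2
  ext ω
  simp [A, longEdgesOverLink]

/-- For independent long-range percolation with `Σ_{k≥1} k φ(k) < ∞` and `φ(k) < 1` for
`k ≥ 2`, with positive probability no edge other than the nearest-neighbour edge `{−1, 0}`
lies above the link `{−1, 0}`; i.e. `0` is a cut point with positive probability. -/
theorem lrp_cut_point_positive_probability
    {Ω : Type*} [MeasurableSpace Ω] (P : Measure Ω) [IsProbabilityMeasure P]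
    (φ : ℕ → ℝ) (hφ : ∀ k, φ k ∈ Set.Icc (0 : ℝ) 1)
    (χ : EdgeIdx → Ω → Bool)
    (hmeas : ∀ i, Measurable (χ i))
    (hber : ∀ i : EdgeIdx, P {ω | χ i ω = true} = ENNReal.ofReal (φ (i.1.2 - i.1.1).toNat))
    (hind : iIndepFun χ P)
    (hsum : (∑' k : ℕ, (k : ℝ≥0∞) * ENNReal.ofReal (φ k)) ≠ ⊤)
    (hlt : ∀ k : ℕ, 2 ≤ k → φ k < 1) :
    0 < P {ω | ∀ i : EdgeIdx, i.1.1 ≤ -1 → 0 ≤ i.1.2 → i.1 ≠ (-1, 0) → χ i ω = false} :=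
  lrp_cut_point_positive_probability_general P φ χ hmeas hber hind hsum hlt
end

section
/- Let (R_j)_{j ∈ ℤ} be identically distributed random variables with values in [0, ∞) whose common expectation is finite, E[R_0] < ∞ (no independence is required). Then the expected degree of 0 in the Gilbert graph on ℤ is finite: E[#{j ∈ ℤ, j ≠ 0 : |j| ≤ R_0 + R_j}] < ∞; in particular deg(0) < ∞ almost surely. -/
open MeasureTheory ProbabilityTheory Set
open scoped ENNReal

/-!
An edge `{0, j}` forces `|j| ≤ 2 R₀` or `|j| ≤ 2 Rⱼ`, and these two events have the same
probability because `Rⱼ` and `R₀` have the same law. Summing over `j`,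
`E deg 0 ≤ 2 ∑_{j ≠ 0} P(|j| ≤ 2 R₀) = 2 E #{j ≠ 0 : |j| ≤ 2 R₀} ≤ 8 E R₀`.
A random variable with finite expectation is almost surely finite.
-/

theorem Int.encard_setOf_ne_zero_abs_le (x : ℝ) :
    ({j : ℤ | j ≠ 0 ∧ |(j : ℝ)| ≤ x}.encard : ℝ≥0∞) ≤ ENNReal.ofReal (2 * x) := by
  set n := ⌊x⌋₊
  have hsub : {j : ℤ | j ≠ 0 ∧ |(j : ℝ)| ≤ x} ⊆ ((Finset.Icc (-n : ℤ) n).erase 0 : Set ℤ) := by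
    rintro j ⟨hj0, hjx⟩
    have : j.natAbs ≤ n := Nat.le_floor (by rwa [Nat.cast_natAbs, Int.cast_abs])
    simp only [Finset.coe_erase, Finset.coe_Icc, mem_sdiff, mem_Icc, mem_singleton_iff]
    omega
  have hcard : ((Finset.Icc (-n : ℤ) n).erase 0).card = 2 * n := by
    rw [Finset.card_erase_of_mem (by simp), Int.card_Icc]
    omega
  calc ({j : ℤ | j ≠ 0 ∧ |(j : ℝ)| ≤ x}.encard : ℝ≥0∞)
      ≤ (((Finset.Icc (-n : ℤ) n).erase 0 : Set ℤ).encard : ℝ≥0∞) :=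
        ENat.toENNReal_le.mpr (encard_le_encard hsub)
    _ = ENNReal.ofReal (2 * n) := by
        rw [encard_coe_eq_coe_finsetCard, hcard]
        simp [ENNReal.ofReal_mul]
    _ ≤ ENNReal.ofReal (2 * x) := by
        rcases le_or_gt 0 x with hx | hx
        · gcongr
          exact Nat.floor_le hx
        · simp [n, Nat.floor_of_nonpos hx.le]

section CountingEvents

variable {Ω ι : Type*}

theorem encard_setOf_mem_eq_tsum_indicator (A : ι → Set Ω) (ω : Ω) :
    ({i | ω ∈ A i}.encard : ℝ≥0∞) = ∑' i, (A i).indicator (fun _ => 1) ω := by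
  rw [← ENNReal.tsum_set_one, tsum_subtype _ fun _ => 1]
  congr! 1 with i

variable [MeasurableSpace Ω] [Countable ι] {A : ι → Set Ω}

theorem measurable_encard_setOf_mem (hA : ∀ i, MeasurableSet (A i)) :
    Measurable fun ω => ({i | ω ∈ A i}.encard : ℝ≥0∞) := by
  simp_rw [encard_setOf_mem_eq_tsum_indicator]
  exact Measurable.tsum fun i => measurable_const.indicator (hA i)

theorem lintegral_encard_setOf_mem (μ : Measure Ω) (hA : ∀ i, MeasurableSet (A i)) :
    ∫⁻ ω, ({i | ω ∈ A i}.encard : ℝ≥0∞) ∂μ = ∑' i, μ (A i) := by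
  simp_rw [encard_setOf_mem_eq_tsum_indicator]
  rw [lintegral_tsum fun i => (measurable_const.indicator (hA i)).aemeasurable]
  exact tsum_congr fun i => lintegral_indicator_one (hA i)

end CountingEvents

section Gilbert

variable {Ω : Type*} {R : ℤ → Ω → ℝ}

def gilbertNeighbors (R : ℤ → Ω → ℝ) (ω : Ω) : Set ℤ :=
  {j | j ≠ 0 ∧ |(j : ℝ)| ≤ R 0 ω + R j ω}

def longRadii (j : ℤ) : Set ℝ := {x | j ≠ 0 ∧ |(j : ℝ)| ≤ 2 * x}

theorem setOf_mem_gilbertNeighbors_subset (j : ℤ) :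
    {ω | j ∈ gilbertNeighbors R ω} ⊆ R 0 ⁻¹' longRadii j ∪ R j ⁻¹' longRadii j := by
  rintro ω ⟨hj, hle⟩
  by_cases h0 : |(j : ℝ)| ≤ 2 * R 0 ω
  · exact Or.inl ⟨hj, h0⟩
  · exact Or.inr ⟨hj, by linarith⟩

variable [MeasurableSpace Ω] {P : Measure Ω}

theorem measurableSet_mem_gilbertNeighbors (hR : ∀ j, Measurable (R j)) (j : ℤ) :
    MeasurableSet {ω | j ∈ gilbertNeighbors R ω} :=
  (MeasurableSet.const _).inter (measurableSet_le measurable_const ((hR 0).add (hR j)))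

theorem measurableSet_longRadii (j : ℤ) : MeasurableSet (longRadii j) :=
  (MeasurableSet.const _).inter (measurableSet_le measurable_const (measurable_id.const_mul 2))

theorem measure_mem_gilbertNeighbors_le (hid : ∀ j, IdentDistrib (R j) (R 0) P P) (j : ℤ) :
    P {ω | j ∈ gilbertNeighbors R ω} ≤ 2 * P (R 0 ⁻¹' longRadii j) :=
  calc P {ω | j ∈ gilbertNeighbors R ω}
      ≤ P (R 0 ⁻¹' longRadii j) + P (R j ⁻¹' longRadii j) :=
        (measure_mono (setOf_mem_gilbertNeighbors_subset j)).trans (measure_union_le _ _)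
    _ = 2 * P (R 0 ⁻¹' longRadii j) := by
        rw [(hid j).measure_mem_eq (measurableSet_longRadii j), two_mul]

theorem lintegral_encard_gilbertNeighbors_le (hR : ∀ j, Measurable (R j))
    (hid : ∀ j, IdentDistrib (R j) (R 0) P P) :
    ∫⁻ ω, ((gilbertNeighbors R ω).encard : ℝ≥0∞) ∂P ≤ 8 * ∫⁻ ω, ENNReal.ofReal (R 0 ω) ∂P :=
  calc ∫⁻ ω, ((gilbertNeighbors R ω).encard : ℝ≥0∞) ∂P
      = ∑' j, P {ω | j ∈ gilbertNeighbors R ω} :=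
        lintegral_encard_setOf_mem P (measurableSet_mem_gilbertNeighbors hR)
    _ ≤ ∑' j, 2 * P (R 0 ⁻¹' longRadii j) :=
        ENNReal.tsum_le_tsum (measure_mem_gilbertNeighbors_le hid)
    _ = 2 * ∫⁻ ω, ({j | R 0 ω ∈ longRadii j}.encard : ℝ≥0∞) ∂P := by
        rw [ENNReal.tsum_mul_left,
          ← lintegral_encard_setOf_mem P fun j => hR 0 (measurableSet_longRadii j)]
        rfl
    _ ≤ 2 * ∫⁻ ω, ENNReal.ofReal (2 * (2 * R 0 ω)) ∂P := by
        gcongr with ω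
        exact Int.encard_setOf_ne_zero_abs_le _
    _ = 8 * ∫⁻ ω, ENNReal.ofReal (R 0 ω) ∂P := by
        simp_rw [← mul_assoc, ENNReal.ofReal_mul (by norm_num : (0 : ℝ) ≤ 2 * 2)]
        rw [lintegral_const_mul _ (hR 0).ennreal_ofReal, ← mul_assoc]
        norm_num

end Gilbert

theorem gilbert_finite_expected_degree_general
    {Ω : Type*} [MeasurableSpace Ω] (P : Measure Ω)
    (R : ℤ → Ω → ℝ)
    (hmeas : ∀ j, Measurable (R j))
    (hid : ∀ j : ℤ, IdentDistrib (R j) (R 0) P P)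
    (hmean : ∫⁻ ω, ENNReal.ofReal (R 0 ω) ∂P ≠ ⊤) :
    (∫⁻ ω, (({j : ℤ | j ≠ 0 ∧ |(j : ℝ)| ≤ R 0 ω + R j ω}.encard : ℝ≥0∞)) ∂P ≠ ⊤) ∧
    (∀ᵐ ω ∂P, {j : ℤ | j ≠ 0 ∧ |(j : ℝ)| ≤ R 0 ω + R j ω}.Finite) := by
  have hdeg : ∫⁻ ω, ((gilbertNeighbors R ω).encard : ℝ≥0∞) ∂P ≠ ⊤ :=
    ne_top_of_le_ne_top (ENNReal.mul_ne_top (by norm_num) hmean)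
      (lintegral_encard_gilbertNeighbors_le hmeas hid)
  refine ⟨hdeg, ?_⟩
  filter_upwards [ae_lt_top (measurable_encard_setOf_mem
    (measurableSet_mem_gilbertNeighbors hmeas)) hdeg] with ω hω
  rwa [ENat.toENNReal_lt_top, encard_lt_top_iff] at hω

/-- Gilbert graph on `ℤ` with identically distributed (not necessarily independent)
radii of finite mean: the expected degree of `0` is finite; in particular the degree
of `0` is a.s. finite. -/
theorem gilbert_finite_expected_degree
    {Ω : Type*} [MeasurableSpace Ω] (P : Measure Ω) [IsProbabilityMeasure P]
    (R : ℤ → Ω → ℝ)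
    (hmeas : ∀ j, Measurable (R j))
    (hnonneg : ∀ j ω, 0 ≤ R j ω)
    (hid : ∀ j : ℤ, IdentDistrib (R j) (R 0) P P)
    (hmean : ∫⁻ ω, ENNReal.ofReal (R 0 ω) ∂P ≠ ⊤) :
    (∫⁻ ω, (({j : ℤ | j ≠ 0 ∧ |(j : ℝ)| ≤ R 0 ω + R j ω}.encard : ℝ≥0∞)) ∂P ≠ ⊤) ∧
    (∀ᵐ ω ∂P, {j : ℤ | j ≠ 0 ∧ |(j : ℝ)| ≤ R 0 ω + R j ω}.Finite) :=
  gilbert_finite_expected_degree_general P R hmeas hid hmean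
end

section
/- Let φ : (0,1) × (0,1) × (0,∞) → [0,1] be measurable and non-increasing in its third argument, and suppose there exists μ > 0 such that Σ_{n≥1} 2^{2n} ∫_{2^{−n−μn}}^{1} ∫_{2^{−n−μn}}^{1} φ(u, v, 2^n) du dv < ∞. Then Σ_{n≥0} ∫_0^1 ∫_0^1 ∫_{2^n}^{2^{n+1}} φ(u, v, x) dx du dv < ∞; equivalently, ∫_0^1 ∫_0^1 ∫_1^∞ φ(u, v, x) dx du dv < ∞. (This is the sparsity estimate showing that condition (2.3) of the paper implies finite expected root degree for the weight-dependent random connection model.) -/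
/-!
Split `(1, ∞)` into the dyadic shells `(2ⁿ, 2ⁿ⁺¹]`. Since `φ` is non-increasing in the distance,
the shell integral is at most `2ⁿ ∬ φ(u, v, 2ⁿ)`. With `ε = 2^{-(1+m)n}`, the part of the unit
square where `u ≤ ε` or `v ≤ ε` has area at most `2ε`, and `φ ≤ 1` there; this contributes
`2ε · 2ⁿ = 2 · 2^{-mn}`, a geometric series, while the rest is at most the `n`-th term of
condition (2.3) because `2ⁿ ≤ 2^{2n}`.
-/

open MeasureTheory Set
open scoped ENNReal

lemma Ioi_one_eq_iUnion_Ioc_pow {a : ℝ} (ha : 1 < a) :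
    Ioi (1 : ℝ) = ⋃ n : ℕ, Ioc (a ^ n) (a ^ (n + 1)) := by
  ext x
  simp only [mem_Ioi, mem_iUnion]
  constructor
  · intro hx
    obtain ⟨k, hk⟩ := exists_mem_Ioc_zpow (zero_lt_one.trans hx) ha
    have hk0 : 0 ≤ k := by
      by_contra! h
      have : a ^ (k + 1) ≤ 1 := zpow_le_one_of_nonpos₀ ha.le (by omega)
      linarith [hk.2]
    lift k to ℕ using hk0
    exact ⟨k, by exact_mod_cast hk⟩
  · rintro ⟨n, hn⟩
    exact (one_le_pow₀ ha.le).trans_lt hn.1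

lemma lintegral_Ioi_one_eq_tsum_Ioc_pow {a : ℝ} (ha : 1 < a) (f : ℝ → ℝ≥0∞) :
    ∫⁻ x in Ioi 1, f x = ∑' n : ℕ, ∫⁻ x in Ioc (a ^ n) (a ^ (n + 1)), f x := by
  rw [Ioi_one_eq_iUnion_Ioc_pow ha]
  exact lintegral_iUnion (fun _ => measurableSet_Ioc)
    (pow_right_mono₀ ha.le).pairwise_disjoint_on_Ioc_succ f

lemma setLIntegral_setLIntegral_setLIntegral_Ioi_one_eq_tsum {a : ℝ} (ha : 1 < a) {f : ℝ → ℝ → ℝ → ℝ≥0∞}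
    (hf : Measurable fun p : ℝ × ℝ × ℝ => f p.1 p.2.1 p.2.2) (s t : Set ℝ) :
    ∫⁻ u in s, ∫⁻ v in t, ∫⁻ x in Ioi 1, f u v x =
      ∑' n : ℕ, ∫⁻ u in s, ∫⁻ v in t, ∫⁻ x in Ioc (a ^ n) (a ^ (n + 1)), f u v x := by
  have hf' : Measurable fun q : (ℝ × ℝ) × ℝ => f q.1.1 q.1.2 q.2 :=
    hf.comp (measurable_fst.fst.prodMk (measurable_fst.snd.prodMk measurable_snd))
  simp_rw [lintegral_Ioi_one_eq_tsum_Ioc_pow ha]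
  have hv (S : Set ℝ) : Measurable fun q : ℝ × ℝ => ∫⁻ x in S, f q.1 q.2 x :=
    hf'.lintegral_prod_right'
  have hinner (u : ℝ) : ∫⁻ v in t, ∑' n : ℕ, ∫⁻ x in Ioc (a ^ n) (a ^ (n + 1)), f u v x =
      ∑' n : ℕ, ∫⁻ v in t, ∫⁻ x in Ioc (a ^ n) (a ^ (n + 1)), f u v x :=
    lintegral_tsum fun _ => ((hv _).comp measurable_prodMk_left).aemeasurable
  rw [lintegral_congr hinner, lintegral_tsum fun _ => (hv _).lintegral_prod_right'.aemeasurable]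

lemma setLIntegral_Ioc_le_of_antitoneOn {g : ℝ → ℝ} {a b : ℝ} (hab : a ≤ b)
    (hg : AntitoneOn g (Icc a b)) :
    ∫⁻ x in Ioc a b, ENNReal.ofReal (g x) ≤ ENNReal.ofReal (g a) * ENNReal.ofReal (b - a) := by
  calc ∫⁻ x in Ioc a b, ENNReal.ofReal (g x) ≤ ∫⁻ _ in Ioc a b, ENNReal.ofReal (g a) :=
        setLIntegral_mono' measurableSet_Ioc fun x hx =>
          ENNReal.ofReal_le_ofReal (hg (left_mem_Icc.2 hab) (Ioc_subset_Icc_self hx) hx.1.le)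
    _ = _ := by rw [setLIntegral_const, Real.volume_Ioc]

lemma setLIntegral_setLIntegral_setLIntegral_Ioc_le {φ : ℝ → ℝ → ℝ → ℝ} {s t : Set ℝ}
    (hs : MeasurableSet s) (ht : MeasurableSet t) {a b : ℝ} (hab : a ≤ b)
    (hφ : ∀ u ∈ s, ∀ v ∈ t, AntitoneOn (φ u v) (Icc a b)) :
    ∫⁻ u in s, ∫⁻ v in t, ∫⁻ x in Ioc a b, ENNReal.ofReal (φ u v x) ≤
      (∫⁻ u in s, ∫⁻ v in t, ENNReal.ofReal (φ u v a)) * ENNReal.ofReal (b - a) := by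
  rw [← lintegral_mul_const' _ _ ENNReal.ofReal_ne_top]
  refine setLIntegral_mono' hs fun u hu => ?_
  rw [← lintegral_mul_const' _ _ ENNReal.ofReal_ne_top]
  exact setLIntegral_mono' ht fun v hv => setLIntegral_Ioc_le_of_antitoneOn hab (hφ u hu v hv)

lemma setLIntegral_Ioo_zero_one_le_one {h : ℝ → ℝ≥0∞} (h1 : ∀ t ∈ Ioo (0 : ℝ) 1, h t ≤ 1) :
    ∫⁻ t in Ioo (0 : ℝ) 1, h t ≤ 1 :=
  (setLIntegral_mono' measurableSet_Ioo h1).trans (by simp)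

lemma setLIntegral_unitSquare_le_one {f : ℝ → ℝ → ℝ≥0∞}
    (hf1 : ∀ u ∈ Ioo (0 : ℝ) 1, ∀ v ∈ Ioo (0 : ℝ) 1, f u v ≤ 1) :
    ∫⁻ u in Ioo (0 : ℝ) 1, ∫⁻ v in Ioo (0 : ℝ) 1, f u v ≤ 1 :=
  setLIntegral_Ioo_zero_one_le_one fun u hu => setLIntegral_Ioo_zero_one_le_one (hf1 u hu)

lemma setLIntegral_Ioo_zero_one_le_add {h : ℝ → ℝ≥0∞} (h1 : ∀ t ∈ Ioo (0 : ℝ) 1, h t ≤ 1)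
    (ε : ℝ) : ∫⁻ t in Ioo (0 : ℝ) 1, h t ≤ ENNReal.ofReal ε + ∫⁻ t in Ioo ε 1, h t := by
  have hcover : Ioo (0 : ℝ) 1 ⊆ (Ioo 0 1 ∩ Iic ε) ∪ Ioo ε 1 := fun t ht => by
    rcases le_or_gt t ε with htε | htε
    exacts [Or.inl ⟨ht, htε⟩, Or.inr ⟨htε, ht.2⟩]
  have hsmall : ∫⁻ t in Ioo 0 1 ∩ Iic ε, h t ≤ ENNReal.ofReal ε :=
    calc ∫⁻ t in Ioo 0 1 ∩ Iic ε, h t ≤ ∫⁻ _ in Ioo 0 1 ∩ Iic ε, 1 :=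
          setLIntegral_mono' (measurableSet_Ioo.inter measurableSet_Iic) fun t ht => h1 t ht.1
      _ = volume (Ioo 0 1 ∩ Iic ε) := by rw [setLIntegral_const, one_mul]
      _ ≤ volume (Ioc 0 ε) := measure_mono fun t ht => ⟨ht.1.1, ht.2⟩
      _ = ENNReal.ofReal ε := by rw [Real.volume_Ioc, sub_zero]
  calc ∫⁻ t in Ioo (0 : ℝ) 1, h t ≤ ∫⁻ t in (Ioo 0 1 ∩ Iic ε) ∪ Ioo ε 1, h t :=
        lintegral_mono_set hcover
    _ ≤ (∫⁻ t in Ioo 0 1 ∩ Iic ε, h t) + ∫⁻ t in Ioo ε 1, h t := lintegral_union_le _ _ _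
    _ ≤ ENNReal.ofReal ε + ∫⁻ t in Ioo ε 1, h t := by gcongr

lemma setLIntegral_unitSquare_le_add {f : ℝ → ℝ → ℝ≥0∞}
    (hf1 : ∀ u ∈ Ioo (0 : ℝ) 1, ∀ v ∈ Ioo (0 : ℝ) 1, f u v ≤ 1) {ε : ℝ} (hε : 0 ≤ ε) :
    ∫⁻ u in Ioo (0 : ℝ) 1, ∫⁻ v in Ioo (0 : ℝ) 1, f u v ≤
      2 * ENNReal.ofReal ε + ∫⁻ u in Ioc ε 1, ∫⁻ v in Ioc ε 1, f u v := by
  have hsub : Ioo ε 1 ⊆ Ioo (0 : ℝ) 1 := Ioo_subset_Ioo_left hε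
  calc ∫⁻ u in Ioo (0 : ℝ) 1, ∫⁻ v in Ioo (0 : ℝ) 1, f u v
      ≤ ENNReal.ofReal ε + ∫⁻ u in Ioo ε 1, ∫⁻ v in Ioo (0 : ℝ) 1, f u v :=
        setLIntegral_Ioo_zero_one_le_add
          (fun u hu => setLIntegral_Ioo_zero_one_le_one (hf1 u hu)) ε
    _ ≤ ENNReal.ofReal ε + ∫⁻ u in Ioo ε 1, (ENNReal.ofReal ε + ∫⁻ v in Ioo ε 1, f u v) := by
        gcongr 1
        exact setLIntegral_mono' measurableSet_Ioo fun u hu =>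
          setLIntegral_Ioo_zero_one_le_add (hf1 u (hsub hu)) ε
    _ = ENNReal.ofReal ε + (ENNReal.ofReal ε * volume (Ioo ε 1) +
          ∫⁻ u in Ioo ε 1, ∫⁻ v in Ioo ε 1, f u v) := by
        rw [lintegral_add_left measurable_const, setLIntegral_const]
    _ ≤ ENNReal.ofReal ε + (ENNReal.ofReal ε * 1 + ∫⁻ u in Ioc ε 1, ∫⁻ v in Ioc ε 1, f u v) := by
        gcongr
        · exact (measure_mono hsub).trans_eq (by simp)
        · exact Ioo_subset_Ioc_self
        · exact Ioo_subset_Ioc_self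
    _ = 2 * ENNReal.ofReal ε + ∫⁻ u in Ioc ε 1, ∫⁻ v in Ioc ε 1, f u v := by
        rw [mul_one, two_mul, add_assoc]

lemma Real.rpow_neg_one_add_mul_mul_pow {b : ℝ} (hb : 0 < b) (m : ℝ) (n : ℕ) :
    b ^ (-(1 + m) * n) * b ^ n = (b ^ (-m)) ^ n := by
  rw [← Real.rpow_natCast, ← Real.rpow_natCast, ← Real.rpow_mul hb.le, ← Real.rpow_add hb]
  ring_nf

lemma ENNReal.tsum_ne_top_of_succ_le_geometric_add {F a : ℕ → ℝ≥0∞} {C r : ℝ≥0∞} (hC : C ≠ ⊤)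
    (hr : r < 1) (h0 : F 0 ≠ ⊤) (ha : ∑' n, a n ≠ ⊤) (hF : ∀ n, F (n + 1) ≤ C * r ^ (n + 1) + a n) :
    ∑' n, F n ≠ ⊤ := by
  rw [tsum_eq_zero_add' ENNReal.summable]
  refine ENNReal.add_ne_top.2 ⟨h0, ne_top_of_le_ne_top ?_ (ENNReal.tsum_le_tsum hF)⟩
  rw [ENNReal.tsum_add, ENNReal.tsum_mul_left, ENNReal.tsum_geometric_add_one]
  refine ENNReal.add_ne_top.2 ⟨ENNReal.mul_ne_top hC (ENNReal.mul_ne_top hr.ne_top ?_), ha⟩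
  exact ENNReal.inv_ne_top.2 (tsub_pos_of_lt hr).ne'

section DyadicShell

variable {φ : ℝ → ℝ → ℝ → ℝ}

lemma lintegral_dyadicShell_le
    (hmono : ∀ u ∈ Ioo (0 : ℝ) 1, ∀ v ∈ Ioo (0 : ℝ) 1, AntitoneOn (φ u v) (Ioi 0)) (n : ℕ) :
    ∫⁻ u in Ioo (0 : ℝ) 1, ∫⁻ v in Ioo (0 : ℝ) 1,
        ∫⁻ x in Ioc ((2 : ℝ) ^ n) ((2 : ℝ) ^ (n + 1)), ENNReal.ofReal (φ u v x) ≤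
      (∫⁻ u in Ioo (0 : ℝ) 1, ∫⁻ v in Ioo (0 : ℝ) 1, ENNReal.ofReal (φ u v (2 ^ n))) *
        ENNReal.ofReal (2 ^ n) := by
  have hpos : (0 : ℝ) < 2 ^ n := by positivity
  convert setLIntegral_setLIntegral_setLIntegral_Ioc_le measurableSet_Ioo measurableSet_Ioo
    (pow_le_pow_right₀ one_le_two (Nat.le_add_right n 1))
    (fun u hu v hv => (hmono u hu v hv).mono fun x hx => hpos.trans_le hx.1) using 3
  ring

lemma lintegral_dyadicShell_succ_le
    (hle : ∀ u ∈ Ioo (0 : ℝ) 1, ∀ v ∈ Ioo (0 : ℝ) 1, ∀ x > 0, φ u v x ≤ 1)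
    (hmono : ∀ u ∈ Ioo (0 : ℝ) 1, ∀ v ∈ Ioo (0 : ℝ) 1, AntitoneOn (φ u v) (Ioi 0))
    (m : ℝ) (n : ℕ) :
    ∫⁻ u in Ioo (0 : ℝ) 1, ∫⁻ v in Ioo (0 : ℝ) 1,
        ∫⁻ x in Ioc ((2 : ℝ) ^ (n + 1)) ((2 : ℝ) ^ (n + 1 + 1)), ENNReal.ofReal (φ u v x) ≤
      2 * ENNReal.ofReal ((2 : ℝ) ^ (-m)) ^ (n + 1) +
        (2 : ℝ≥0∞) ^ (2 * (n + 1)) *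
          ∫⁻ u in Ioc ((2 : ℝ) ^ (-(1 + m) * ((n : ℝ) + 1))) 1,
            ∫⁻ v in Ioc ((2 : ℝ) ^ (-(1 + m) * ((n : ℝ) + 1))) 1,
              ENNReal.ofReal (φ u v ((2 : ℝ) ^ (n + 1))) := by
  set c : ℝ := 2 ^ (n + 1)
  set ε : ℝ := 2 ^ (-(1 + m) * ((n : ℝ) + 1))
  have hεc : ε * c = (2 ^ (-m)) ^ (n + 1) := by
    simpa only [Nat.cast_add, Nat.cast_one] using
      Real.rpow_neg_one_add_mul_mul_pow two_pos m (n + 1)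
  have hc : ENNReal.ofReal c ≤ 2 ^ (2 * (n + 1)) := by
    rw [ENNReal.ofReal_pow zero_le_two, ENNReal.ofReal_ofNat]
    exact pow_le_pow_right₀ one_le_two (by omega)
  calc _ ≤ (∫⁻ u in Ioo (0 : ℝ) 1, ∫⁻ v in Ioo (0 : ℝ) 1, ENNReal.ofReal (φ u v c)) *
          ENNReal.ofReal c := lintegral_dyadicShell_le hmono (n + 1)
    _ ≤ (2 * ENNReal.ofReal ε + ∫⁻ u in Ioc ε 1, ∫⁻ v in Ioc ε 1, ENNReal.ofReal (φ u v c)) *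
          ENNReal.ofReal c := by
        gcongr
        exact setLIntegral_unitSquare_le_add
          (fun u hu v hv => ENNReal.ofReal_le_one.2 (hle u hu v hv c (by positivity)))
          (by positivity)
    _ = 2 * ENNReal.ofReal (ε * c) +
          ENNReal.ofReal c * ∫⁻ u in Ioc ε 1, ∫⁻ v in Ioc ε 1, ENNReal.ofReal (φ u v c) := by
        rw [ENNReal.ofReal_mul (by positivity)]
        ring
    _ ≤ _ := by
        rw [hεc, ENNReal.ofReal_pow (by positivity)]
        gcongr

end DyadicShell

/-- Sparsity for weight-dependent random connection models: if the connection function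
`φ` is non-increasing in the distance argument and satisfies condition (2.3), i.e. for
some `m > 0` the sum `Σ_{n≥1} 2^{2n} ∫_{2^{−n−mn}}^1 ∫_{2^{−n−mn}}^1 φ(u,v,2^n) du dv`
is finite, then `Σ_{n≥0} ∫_0^1 ∫_0^1 ∫_{2^n}^{2^{n+1}} φ(u,v,x) dx du dv < ∞`;
equivalently `∫_0^1 ∫_0^1 ∫_1^∞ φ(u,v,x) dx du dv < ∞`. -/
theorem wdrcm_sparsity
    (φ : ℝ → ℝ → ℝ → ℝ)
    (hmeas : Measurable (fun p : ℝ × ℝ × ℝ => φ p.1 p.2.1 p.2.2))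
    (hrange : ∀ u v x : ℝ, u ∈ Set.Ioo (0 : ℝ) 1 → v ∈ Set.Ioo (0 : ℝ) 1 → 0 < x →
      φ u v x ∈ Set.Icc (0 : ℝ) 1)
    (hmono : ∀ u v : ℝ, u ∈ Set.Ioo (0 : ℝ) 1 → v ∈ Set.Ioo (0 : ℝ) 1 →
      AntitoneOn (φ u v) (Set.Ioi (0 : ℝ)))
    (hcond : ∃ m : ℝ, 0 < m ∧
      (∑' n : ℕ, (2 : ℝ≥0∞) ^ (2 * (n + 1)) *
        ∫⁻ u in Set.Ioc ((2 : ℝ) ^ (-(1 + m) * ((n : ℝ) + 1))) 1,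
          ∫⁻ v in Set.Ioc ((2 : ℝ) ^ (-(1 + m) * ((n : ℝ) + 1))) 1,
            ENNReal.ofReal (φ u v ((2 : ℝ) ^ (n + 1)))) ≠ ⊤) :
    ((∑' n : ℕ, ∫⁻ u in Set.Ioo (0 : ℝ) 1, ∫⁻ v in Set.Ioo (0 : ℝ) 1,
        ∫⁻ x in Set.Ioc ((2 : ℝ) ^ n) ((2 : ℝ) ^ (n + 1)),
          ENNReal.ofReal (φ u v x)) ≠ ⊤) ∧
    ((∫⁻ u in Set.Ioo (0 : ℝ) 1, ∫⁻ v in Set.Ioo (0 : ℝ) 1,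
        ∫⁻ x in Set.Ioi (1 : ℝ), ENNReal.ofReal (φ u v x)) ≠ ⊤) := by
  obtain ⟨m, hm, hsum⟩ := hcond
  have hle : ∀ u ∈ Ioo (0 : ℝ) 1, ∀ v ∈ Ioo (0 : ℝ) 1, ∀ x > 0, φ u v x ≤ 1 :=
    fun u hu v hv x hx => (hrange u v x hu hv hx).2
  have hanti : ∀ u ∈ Ioo (0 : ℝ) 1, ∀ v ∈ Ioo (0 : ℝ) 1, AntitoneOn (φ u v) (Ioi 0) :=
    fun u hu v hv => hmono u v hu hv
  have hr : ENNReal.ofReal ((2 : ℝ) ^ (-m)) < 1 :=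
    ENNReal.ofReal_lt_one.2 (Real.rpow_lt_one_of_one_lt_of_neg one_lt_two (neg_neg_of_pos hm))
  have hshell₀ : ∫⁻ u in Ioo (0 : ℝ) 1, ∫⁻ v in Ioo (0 : ℝ) 1,
      ∫⁻ x in Ioc ((2 : ℝ) ^ 0) ((2 : ℝ) ^ (0 + 1)), ENNReal.ofReal (φ u v x) ≠ ⊤ := by
    refine ne_top_of_le_ne_top ENNReal.one_ne_top ((lintegral_dyadicShell_le hanti 0).trans ?_)
    simpa using setLIntegral_unitSquare_le_one fun u hu v hv =>
      ENNReal.ofReal_le_one.2 (hle u hu v hv 1 one_pos)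
  rw [setLIntegral_setLIntegral_setLIntegral_Ioi_one_eq_tsum one_lt_two hmeas.ennreal_ofReal, and_self]
  exact ENNReal.tsum_ne_top_of_succ_le_geometric_add ENNReal.ofNat_ne_top hr hshell₀ hsum
    (lintegral_dyadicShell_succ_le hle hanti m)
end

section
/- Fix γ ∈ (0, 1) and define the connection function φ(u, v, x) = 1 if x ≤ u^{−γ} v^{−γ} and φ(u, v, x) = 0 otherwise. Then there exists μ > 0 with Σ_{n≥1} 2^{2n} ∫_{2^{−n−μn}}^{1} ∫_{2^{−n−μn}}^{1} φ(u, v, 2^n) du dv < ∞ if and only if γ < 1/2. -/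
/-!
For `γ < 1/2` pick `s ∈ (2, 1/γ)`. Markov's inequality bounds `φ(u, v, 2^n)` by
`2^{-sn} (uv)^{-γs}`, which is integrable on `(0,1]²` since `γs < 1`, so the summands are
`O(2^{(2-s)n})` and the series converges for every `μ`. For `γ ≥ 1/2` we have `φ(u, v, 2^n) = 1`
on the square `(2^{-n-μn}, 2^{-n}]²`, whose area is at least `4^{-n-1}` once `μn ≥ 1`, so the
summands stay above `1/4`.
-/

open MeasureTheory Set
open scoped ENNReal

lemma lintegral_Ioc_rpow_neg_le {θ : ℝ} (hθ : θ < 1) {a : ℝ} (ha : 0 ≤ a) :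
    ∫⁻ u in Ioc a 1, ENNReal.ofReal (u ^ (-θ)) ≤ ENNReal.ofReal (1 / (1 - θ)) := by
  have hint : IntegrableOn (fun u : ℝ => u ^ (-θ)) (Ioc 0 1) := by
    simpa [intervalIntegrable_iff, uIoc_of_le zero_le_one] using
      intervalIntegral.intervalIntegrable_rpow' (a := 0) (b := 1) (r := -θ) (by linarith)
  calc ∫⁻ u in Ioc a 1, ENNReal.ofReal (u ^ (-θ))
      ≤ ∫⁻ u in Ioc 0 1, ENNReal.ofReal (u ^ (-θ)) := lintegral_mono_set (Ioc_subset_Ioc_left ha)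
    _ = ENNReal.ofReal (∫ u in (0 : ℝ)..1, u ^ (-θ)) := by
      rw [intervalIntegral.integral_of_le zero_le_one, ofReal_integral_eq_lintegral_ofReal hint]
      filter_upwards [ae_restrict_mem measurableSet_Ioc] with u hu using
        Real.rpow_nonneg hu.1.le _
    _ = ENNReal.ofReal (1 / (1 - θ)) := by
      rw [integral_rpow (Or.inl (by linarith)), Real.one_rpow,
        Real.zero_rpow (by linarith), neg_add_eq_sub, sub_zero]

lemma indicator_le_ofReal_rpow {c x s : ℝ} (hc : 0 < c) (hs : 0 ≤ s) :
    (if c ≤ x then (1 : ℝ≥0∞) else 0) ≤ ENNReal.ofReal (c ^ (-s)) * ENNReal.ofReal (x ^ s) := by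
  split_ifs with h
  · rw [← ENNReal.ofReal_mul (Real.rpow_nonneg hc.le _), ← ENNReal.ofReal_one]
    refine ENNReal.ofReal_le_ofReal ?_
    calc (1 : ℝ) = c ^ (-s) * c ^ s := by
          rw [Real.rpow_neg hc.le, inv_mul_cancel₀ (by positivity)]
      _ ≤ c ^ (-s) * x ^ s := by gcongr
  · exact zero_le

noncomputable def hyperbolicConnection (γ u v x : ℝ) : ℝ≥0∞ :=
  if x ≤ u ^ (-γ) * v ^ (-γ) then 1 else 0

noncomputable def connectionMass (γ a x : ℝ) : ℝ≥0∞ :=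
  ∫⁻ u in Ioc a 1, ∫⁻ v in Ioc a 1, hyperbolicConnection γ u v x

lemma hyperbolicConnection_le {γ s u v x : ℝ} (hs : 0 ≤ s) (hx : 0 < x) (hu : 0 < u)
    (hv : 0 < v) :
    hyperbolicConnection γ u v x ≤
      ENNReal.ofReal (x ^ (-s)) * ENNReal.ofReal (u ^ (-(γ * s))) *
        ENNReal.ofReal (v ^ (-(γ * s))) := by
  refine (indicator_le_ofReal_rpow hx hs).trans_eq ?_
  rw [Real.mul_rpow (by positivity) (by positivity), ← Real.rpow_mul hu.le, ← Real.rpow_mul hv.le,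
    neg_mul, ENNReal.ofReal_mul (by positivity), mul_assoc]

lemma connectionMass_le {γ s a x : ℝ} (hs : 0 ≤ s) (hγs : γ * s < 1) (ha : 0 ≤ a) (hx : 0 < x) :
    connectionMass γ a x ≤ ENNReal.ofReal (x ^ (-s)) * ENNReal.ofReal (1 / (1 - γ * s)) ^ 2 := by
  have hmeas : Measurable fun u : ℝ => ENNReal.ofReal (u ^ (-(γ * s))) :=
    (measurable_id.pow_const _).ennreal_ofReal
  calc connectionMass γ a x
      ≤ ∫⁻ u in Ioc a 1, ∫⁻ v in Ioc a 1, ENNReal.ofReal (x ^ (-s)) *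
          ENNReal.ofReal (u ^ (-(γ * s))) * ENNReal.ofReal (v ^ (-(γ * s))) :=
        setLIntegral_mono' measurableSet_Ioc fun u hu => setLIntegral_mono' measurableSet_Ioc
          fun v hv => hyperbolicConnection_le hs hx (ha.trans_lt hu.1) (ha.trans_lt hv.1)
    _ = ENNReal.ofReal (x ^ (-s)) * (∫⁻ u in Ioc a 1, ENNReal.ofReal (u ^ (-(γ * s)))) *
          ∫⁻ v in Ioc a 1, ENNReal.ofReal (v ^ (-(γ * s))) := by
        rw [lintegral_lintegral_mul (hmeas.const_mul _).aemeasurable hmeas.aemeasurable,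
          lintegral_const_mul _ hmeas]
    _ ≤ ENNReal.ofReal (x ^ (-s)) * ENNReal.ofReal (1 / (1 - γ * s)) ^ 2 := by
        rw [mul_assoc, sq]
        gcongr <;> exact lintegral_Ioc_rpow_neg_le hγs ha

lemma ofReal_sub_sq_le_connectionMass {γ a b x : ℝ} (hγ : 0 ≤ γ) (ha : 0 < a) (hab : a ≤ b)
    (hb : b ≤ 1) (hx : x ≤ b ^ (-γ) * b ^ (-γ)) :
    ENNReal.ofReal (b - a) ^ 2 ≤ connectionMass γ a x := by
  have hsub : Ioc a b ⊆ Ioc a 1 := Ioc_subset_Ioc_right hb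
  have hle : ∀ w ∈ Ioc a b, b ^ (-γ) ≤ w ^ (-γ) := fun w hw =>
    Real.rpow_le_rpow_of_nonpos (ha.trans hw.1) hw.2 (neg_nonpos.2 hγ)
  calc ENNReal.ofReal (b - a) ^ 2 = ∫⁻ u in Ioc a b, ∫⁻ v in Ioc a b, 1 := by
        simp [Real.volume_Ioc, sq]
    _ ≤ ∫⁻ u in Ioc a b, ∫⁻ v in Ioc a b, hyperbolicConnection γ u v x :=
        setLIntegral_mono' measurableSet_Ioc fun u hu => setLIntegral_mono' measurableSet_Ioc
          fun v hv => by
            rw [hyperbolicConnection, if_pos]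
            exact hx.trans (mul_le_mul (hle u hu) (hle v hv)
              (Real.rpow_nonneg (ha.trans_le hab).le _) (Real.rpow_nonneg (ha.trans hu.1).le _))
    _ ≤ connectionMass γ a x :=
        (lintegral_mono fun u => lintegral_mono_set hsub).trans (lintegral_mono_set hsub)

-- The summand of condition (2.3) with index `n + 1`.
noncomputable def conditionTerm (γ m : ℝ) (n : ℕ) : ℝ≥0∞ :=
  2 ^ (2 * (n + 1)) * connectionMass γ ((2 : ℝ) ^ (-(1 + m) * ((n : ℝ) + 1))) ((2 : ℝ) ^ (n + 1))

lemma exists_two_lt_and_mul_lt_one {γ : ℝ} (hγ : γ < 1 / 2) : ∃ s, 2 < s ∧ γ * s < 1 := by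
  rcases le_or_gt γ 0 with hγ0 | hγ0
  · exact ⟨3, by norm_num, by linarith⟩
  · have h2 : 2 < 1 / γ := by rw [lt_div_iff₀ hγ0]; linarith
    refine ⟨(2 + 1 / γ) / 2, by linarith, ?_⟩
    field_simp
    linarith

lemma two_pow_mul_rpow_neg (N : ℕ) (s : ℝ) :
    (2 : ℝ) ^ (2 * N) * ((2 : ℝ) ^ N) ^ (-s) = ((2 : ℝ) ^ (2 - s)) ^ N := by
  rw [← Real.rpow_natCast_mul zero_le_two, ← Real.rpow_mul_natCast zero_le_two,
    ← Real.rpow_natCast, ← Real.rpow_add two_pos]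
  push_cast
  ring_nf

lemma conditionTerm_le {γ s : ℝ} (hs : 0 ≤ s) (hγs : γ * s < 1) (m : ℝ) (n : ℕ) :
    conditionTerm γ m n ≤
      ENNReal.ofReal ((2 : ℝ) ^ (2 - s)) ^ (n + 1) * ENNReal.ofReal (1 / (1 - γ * s)) ^ 2 := by
  calc conditionTerm γ m n
      ≤ 2 ^ (2 * (n + 1)) * (ENNReal.ofReal (((2 : ℝ) ^ (n + 1)) ^ (-s)) *
          ENNReal.ofReal (1 / (1 - γ * s)) ^ 2) := by
        unfold conditionTerm
        gcongr
        exact connectionMass_le hs hγs (by positivity) (by positivity)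
    _ = ENNReal.ofReal ((2 : ℝ) ^ (2 - s)) ^ (n + 1) * ENNReal.ofReal (1 / (1 - γ * s)) ^ 2 := by
        rw [← mul_assoc]
        congr 1
        rw [← ENNReal.ofReal_pow (by positivity), ← two_pow_mul_rpow_neg,
          ENNReal.ofReal_mul (by positivity), ENNReal.ofReal_pow zero_le_two, ENNReal.ofReal_ofNat]

lemma tsum_conditionTerm_ne_top {γ : ℝ} (hγ : γ < 1 / 2) (m : ℝ) :
    ∑' n, conditionTerm γ m n ≠ ⊤ := by
  obtain ⟨s, hs, hγs⟩ := exists_two_lt_and_mul_lt_one hγ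
  set q := ENNReal.ofReal ((2 : ℝ) ^ (2 - s))
  have hq : q < 1 := ENNReal.ofReal_lt_one.2 (Real.rpow_lt_one_of_one_lt_of_neg one_lt_two
    (by linarith))
  refine ne_top_of_le_ne_top ?_ (ENNReal.tsum_le_tsum (conditionTerm_le (by linarith) hγs m))
  rw [ENNReal.tsum_mul_right, ENNReal.tsum_geometric_add_one]
  exact ENNReal.mul_ne_top (ENNReal.mul_ne_top ENNReal.ofReal_ne_top
    (ENNReal.inv_ne_top.2 (tsub_pos_of_lt hq).ne')) (ENNReal.pow_ne_top ENNReal.ofReal_ne_top)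

lemma two_rpow_neg_le_inv_two_pow_div_two {m : ℝ} {n : ℕ} (hmn : 1 ≤ m * ((n : ℝ) + 1)) :
    (2 : ℝ) ^ (-(1 + m) * ((n : ℝ) + 1)) ≤ ((2 : ℝ) ^ (n + 1))⁻¹ / 2 := by
  rw [← Real.rpow_natCast, ← Real.rpow_neg zero_le_two, ← Real.rpow_sub_one two_ne_zero]
  apply Real.rpow_le_rpow_of_exponent_le one_le_two
  push_cast
  linarith

lemma quarter_le_conditionTerm {γ m : ℝ} (hγ : 1 / 2 ≤ γ) {n : ℕ}
    (hmn : 1 ≤ m * ((n : ℝ) + 1)) :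
    ENNReal.ofReal (1 / 4) ≤ conditionTerm γ m n := by
  set b : ℝ := ((2 : ℝ) ^ (n + 1))⁻¹
  have hb : 0 < b := by positivity
  have ha := two_rpow_neg_le_inv_two_pow_div_two hmn
  have hx : (2 : ℝ) ^ (n + 1) ≤ b ^ (-γ) * b ^ (-γ) := by
    rw [← Real.rpow_add hb, Real.inv_rpow (by positivity), ← Real.rpow_neg (by positivity),
      neg_add, neg_neg]
    calc (2 : ℝ) ^ (n + 1) = ((2 : ℝ) ^ (n + 1)) ^ (1 : ℝ) := (Real.rpow_one _).symm
      _ ≤ ((2 : ℝ) ^ (n + 1)) ^ (γ + γ) :=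
        Real.rpow_le_rpow_of_exponent_le (one_le_pow₀ one_le_two) (by linarith)
  calc ENNReal.ofReal (1 / 4) = 2 ^ (2 * (n + 1)) * ENNReal.ofReal (b / 2) ^ 2 := by
        rw [← ENNReal.ofReal_ofNat 2, ← ENNReal.ofReal_pow zero_le_two,
          ← ENNReal.ofReal_pow (by positivity), ← ENNReal.ofReal_mul (by positivity), pow_mul',
          ← mul_pow, ← mul_div_assoc, mul_inv_cancel₀ (by positivity)]
        norm_num
    _ ≤ 2 ^ (2 * (n + 1)) * ENNReal.ofReal (b - (2 : ℝ) ^ (-(1 + m) * ((n : ℝ) + 1))) ^ 2 := by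
        gcongr
        linarith
    _ ≤ conditionTerm γ m n := by
        unfold conditionTerm
        gcongr
        exact ofReal_sub_sq_le_connectionMass (by linarith) (by positivity) (by linarith)
          (inv_le_one_of_one_le₀ (one_le_pow₀ one_le_two)) hx

lemma tsum_conditionTerm_eq_top {γ m : ℝ} (hγ : 1 / 2 ≤ γ) (hm : 0 < m) :
    ∑' n, conditionTerm γ m n = ⊤ := by
  by_contra hsum
  have hsmall : ∀ᶠ n in Filter.atTop, conditionTerm γ m n < ENNReal.ofReal (1 / 4) :=
    (ENNReal.tendsto_atTop_zero_of_tsum_ne_top hsum).eventually (gt_mem_nhds (by norm_num))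
  have hlarge : ∀ᶠ n : ℕ in Filter.atTop, 1 ≤ m * ((n : ℝ) + 1) := by
    filter_upwards [tendsto_natCast_atTop_atTop.eventually_ge_atTop (1 / m)] with n hn
    rw [div_le_iff₀ hm] at hn
    linarith
  obtain ⟨n, hlt, hmn⟩ := (hsmall.and hlarge).exists
  exact (quarter_le_conditionTerm hγ hmn).not_gt hlt

theorem hyperbolic_condition_iff_general (γ : ℝ) :
    (∃ m : ℝ, 0 < m ∧
      (∑' n : ℕ, (2 : ℝ≥0∞) ^ (2 * (n + 1)) *
        ∫⁻ u in Set.Ioc ((2 : ℝ) ^ (-(1 + m) * ((n : ℝ) + 1))) 1,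
          ∫⁻ v in Set.Ioc ((2 : ℝ) ^ (-(1 + m) * ((n : ℝ) + 1))) 1,
            (if (2 : ℝ) ^ (n + 1) ≤ u ^ (-γ) * v ^ (-γ) then (1 : ℝ≥0∞) else 0)) ≠ ⊤)
    ↔ γ < 1 / 2 := by
  change (∃ m : ℝ, 0 < m ∧ ∑' n, conditionTerm γ m n ≠ ⊤) ↔ _
  refine ⟨fun ⟨m, hm, hsum⟩ => ?_, fun hγ => ⟨1, one_pos, tsum_conditionTerm_ne_top hγ 1⟩⟩
  by_contra! hγ
  exact hsum (tsum_conditionTerm_eq_top hγ hm)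

/-- For the connection function `φ(u,v,x) = 1{x ≤ u^{−γ} v^{−γ}}` with `γ ∈ (0,1)`
(the weak local limit of hyperbolic random graphs), condition (2.3) of the paper —
the existence of `m > 0` with
`Σ_{n≥1} 2^{2n} ∫_{2^{−n−mn}}^1 ∫_{2^{−n−mn}}^1 φ(u,v,2^n) du dv < ∞` —
holds if and only if `γ < 1/2`. -/
theorem hyperbolic_condition_iff (γ : ℝ) (hγ : γ ∈ Set.Ioo (0 : ℝ) 1) :
    (∃ m : ℝ, 0 < m ∧
      (∑' n : ℕ, (2 : ℝ≥0∞) ^ (2 * (n + 1)) *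
        ∫⁻ u in Set.Ioc ((2 : ℝ) ^ (-(1 + m) * ((n : ℝ) + 1))) 1,
          ∫⁻ v in Set.Ioc ((2 : ℝ) ^ (-(1 + m) * ((n : ℝ) + 1))) 1,
            (if (2 : ℝ) ^ (n + 1) ≤ u ^ (-γ) * v ^ (-γ) then (1 : ℝ≥0∞) else 0)) ≠ ⊤)
    ↔ γ < 1 / 2 :=
  hyperbolic_condition_iff_general γ
end
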